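/- arXiv:2208.13095 — 5 statements merged into one kernel-verified Lean document; each statement's English description precedes it below -/
import Mathlib

section
/- Let (Γ, N) be a numbered graph. A word over the standard generating set S is a geodesic of NGP(Γ, N) if and only if it is accepted by the geodesic automaton 𝒟 of (Γ, N). -/
variable {V : Type*}

def ngpRels (G : SimpleGraph V) (N : V → ℕ) : Set (FreeGroup V) :=
  {r | (∃ v, r = FreeGroup.of v ^ N v) ∨
       (∃ u v, G.Adj u v ∧
          r = FreeGroup.of u * FreeGroup.of v * (FreeGroup.of u)⁻¹ * (FreeGroup.of v)⁻¹)}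

abbrev NGP (G : SimpleGraph V) (N : V → ℕ) := PresentedGroup (ngpRels G N)

def evalWord (G : SimpleGraph V) (N : V → ℕ) (w : List (V × Bool)) : NGP G N :=
  (w.map fun l => if l.2 then (PresentedGroup.of l.1 : NGP G N) else (PresentedGroup.of l.1)⁻¹).prod

def ValidWord (N : V → ℕ) (w : List (V × Bool)) : Prop :=
  ∀ l ∈ w, l.2 = false → N l.1 ≠ 2

def IsGeodesic (G : SimpleGraph V) (N : V → ℕ) (w : List (V × Bool)) : Prop :=
  ValidWord N w ∧ ∀ w' : List (V × Bool), ValidWord N w' →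
    evalWord G N w' = evalWord G N w → w.length ≤ w'.length

def IsPoweredClique (G : SimpleGraph V) (N : V → ℕ) (f : V → ℤ) : Prop :=
  G.IsClique {v | f v ≠ 0} ∧
  ∀ v, (N v = 2 → 0 ≤ f v ∧ f v ≤ 1) ∧
       (N v ≠ 2 → -((N v / 2 : ℕ) : ℤ) ≤ f v ∧ f v ≤ ((N v / 2 : ℕ) : ℤ))

def step (G : SimpleGraph V) [DecidableRel G.Adj] [DecidableEq V] (N : V → ℕ)
    (f : V → ℤ) (l : V × Bool) : Option (V → ℤ) :=
  if l.2 then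
    if 0 ≤ f l.1 ∧ f l.1 < ((N l.1 / 2 : ℕ) : ℤ) then
      some fun u => if u = l.1 then f l.1 + 1 else if G.Adj l.1 u then f u else 0
    else none
  else
    if N l.1 ≠ 2 ∧ -((N l.1 / 2 : ℕ) : ℤ) < f l.1 ∧ f l.1 ≤ 0 then
      some fun u => if u = l.1 then f l.1 - 1 else if G.Adj l.1 u then f u else 0
    else none

def run (G : SimpleGraph V) [DecidableRel G.Adj] [DecidableEq V] (N : V → ℕ) :
    (V → ℤ) → List (V × Bool) → Option (V → ℤ)
  | f, [] => some f
  | f, l :: w =>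
    match step G N f l with
    | none => none
    | some g => run G N g w

def Accepts (G : SimpleGraph V) [DecidableRel G.Adj] [DecidableEq V] (N : V → ℕ)
    (f : V → ℤ) (w : List (V × Bool)) : Prop :=
  ∃ g, run G N f w = some g ∧ IsPoweredClique G N g

/-!
While reading a word, the state of the automaton records for each vertex `v` the exponent `k` of
the last `v`-syllable that can still be shuffled to the end of the word. A letter `v^{±1}` is
rejected exactly when `k ± 1` can be written with at most `|k|` letters (it cancels, or it leaves
the range `|k ± 1| ≤ N v / 2`); replacing `v^k v^{±1}` by that shorter power yields a shorter word,
so geodesics are accepted.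

Conversely, the group acts on the right on reduced syllable lists up to shuffling commuting
syllables (the normal form of a graph product). The total exponent of the normal form grows by
at most one per letter, and by exactly one along an accepted word, where the automaton state
predicts the syllable every letter merges into. Hence no word for the same element is shorter.
-/

namespace NumberedGraphProduct

/-- Among the representatives of `x` modulo `n` of least absolute value, the largest: for `n = 2`
it is `0` or `1`, as generators of order two have no inverse letters. -/
def centeredMod (n : ℕ) (x : ℤ) : ℤ := (x + ((n - 1) / 2 : ℕ)) % n - ((n - 1) / 2 : ℕ)

section CenteredMod

variable {n : ℕ}

lemma exists_centeredMod_eq_add_mul (x : ℤ) : ∃ j, centeredMod n x = x + n * j :=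
  ⟨-((x + ((n - 1) / 2 : ℕ)) / n), by rw [centeredMod, Int.emod_def]; ring⟩

lemma centeredMod_add_mul (x j : ℤ) : centeredMod n (x + n * j) = centeredMod n x := by
  rw [centeredMod, centeredMod, add_right_comm, Int.add_mul_emod_self_left]

lemma centeredMod_add_centeredMod (x e : ℤ) :
    centeredMod n (centeredMod n x + e) = centeredMod n (x + e) := by
  obtain ⟨j, hj⟩ := exists_centeredMod_eq_add_mul (n := n) x
  rw [hj, add_right_comm, centeredMod_add_mul]

lemma centeredMod_mem_window (hn : 0 < n) (x : ℤ) :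
    -(((n - 1) / 2 : ℕ) : ℤ) ≤ centeredMod n x ∧ centeredMod n x ≤ ((n / 2 : ℕ) : ℤ) := by
  have h1 := Int.emod_nonneg (x + ((n - 1) / 2 : ℕ)) (by omega : (n : ℤ) ≠ 0)
  have h2 := Int.emod_lt_of_pos (x + ((n - 1) / 2 : ℕ)) (by omega : (0 : ℤ) < n)
  unfold centeredMod
  omega

lemma centeredMod_eq_self (hn : 0 < n) {x : ℤ} (h1 : -(((n - 1) / 2 : ℕ) : ℤ) ≤ x)
    (h2 : x ≤ ((n / 2 : ℕ) : ℤ)) : centeredMod n x = x := by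
  rw [centeredMod, Int.emod_eq_of_lt (by omega) (by omega)]
  omega

lemma centeredMod_centeredMod (hn : 0 < n) (x : ℤ) :
    centeredMod n (centeredMod n x) = centeredMod n x :=
  centeredMod_eq_self hn (centeredMod_mem_window hn x).1 (centeredMod_mem_window hn x).2

lemma natAbs_centeredMod_le_half (hn : 0 < n) (x : ℤ) : (centeredMod n x).natAbs ≤ n / 2 := by
  have := centeredMod_mem_window hn x
  omega

lemma natAbs_centeredMod_le (hn : 0 < n) (x : ℤ) : (centeredMod n x).natAbs ≤ x.natAbs := by
  have := centeredMod_mem_window hn x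
  by_cases hx : -(((n - 1) / 2 : ℕ) : ℤ) ≤ x ∧ x ≤ ((n / 2 : ℕ) : ℤ)
  · rw [centeredMod_eq_self hn hx.1 hx.2]
  · omega

lemma natAbs_centeredMod_of_le_half (hn : 0 < n) {x : ℤ} (hx : x.natAbs ≤ n / 2) :
    (centeredMod n x).natAbs = x.natAbs := by
  by_cases h : -(((n - 1) / 2 : ℕ) : ℤ) ≤ x
  · rw [centeredMod_eq_self hn h (by omega)]
  · rw [← centeredMod_add_mul x 1, centeredMod_eq_self hn (by omega) (by omega)]
    omega

lemma centeredMod_two_nonneg (x : ℤ) : 0 ≤ centeredMod 2 x :=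
  (centeredMod_mem_window two_pos x).1

lemma centeredMod_zero_right (n : ℕ) : centeredMod n 0 = 0 := by
  rcases Nat.eq_zero_or_pos n with rfl | hn
  · simp [centeredMod]
  · exact centeredMod_eq_self hn (by omega) (by omega)

lemma natAbs_centeredMod_add_le (hn : 0 < n) {x e : ℤ} (he : e.natAbs = 1)
    (h : ¬((x + e).natAbs = x.natAbs + 1 ∧ (x + e).natAbs ≤ n / 2)) :
    (centeredMod n (x + e)).natAbs ≤ x.natAbs := by
  have := natAbs_centeredMod_le hn (x + e)
  have := natAbs_centeredMod_le_half hn (x + e)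
  omega

end CenteredMod

section Syllables

variable (G : SimpleGraph V)

/- A syllable list `[(v₁, k₁), …, (vₘ, kₘ)]` stands for the word `vₘ^kₘ ⋯ v₁^k₁`: its head is
the last syllable, where new letters arrive. -/

def consSyllable (v : V) (k : ℤ) (t : List (V × ℤ)) : List (V × ℤ) :=
  if k = 0 then t else (v, k) :: t

def weight (s : List (V × ℤ)) : ℕ := (s.map fun p => p.2.natAbs).sum

inductive Shuffle : List (V × ℤ) → List (V × ℤ) → Prop
  | nil : Shuffle [] []
  | cons (a : V × ℤ) {s t : List (V × ℤ)} : Shuffle s t → Shuffle (a :: s) (a :: t)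
  | swap (a b : V × ℤ) (s : List (V × ℤ)) :
      G.Adj a.1 b.1 → Shuffle (a :: b :: s) (b :: a :: s)
  | trans {s t r : List (V × ℤ)} : Shuffle s t → Shuffle t r → Shuffle s r

variable {G}

@[simp] lemma weight_cons (p : V × ℤ) (t : List (V × ℤ)) :
    weight (p :: t) = p.2.natAbs + weight t := rfl

lemma weight_consSyllable (v : V) (k : ℤ) (t : List (V × ℤ)) :
    weight (consSyllable v k t) = k.natAbs + weight t := by
  unfold consSyllable; split_ifs with h <;> simp [h]

namespace Shuffle

lemma refl (s : List (V × ℤ)) : Shuffle G s s := by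
  induction s with
  | nil => exact nil
  | cons a t ih => exact ih.cons a

lemma symm {s t : List (V × ℤ)} (h : Shuffle G s t) : Shuffle G t s := by
  induction h with
  | nil => exact nil
  | cons a _ ih => exact ih.cons a
  | swap a b s h => exact swap b a s h.symm
  | trans _ _ ih₁ ih₂ => exact ih₂.trans ih₁

lemma weight_eq {s t : List (V × ℤ)} (h : Shuffle G s t) : weight s = weight t := by
  induction h with
  | nil => rfl
  | cons a _ ih => simp [ih]
  | swap a b s h => simp; omega
  | trans _ _ ih₁ ih₂ => exact ih₁.trans ih₂

lemma consSyllable_congr {s t : List (V × ℤ)} (h : Shuffle G s t) (v : V) (k : ℤ) :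
    Shuffle G (consSyllable v k s) (consSyllable v k t) := by
  unfold consSyllable; split_ifs
  · exact h
  · exact h.cons _

end Shuffle

lemma shuffle_consSyllable_comm {u v : V} (hadj : G.Adj u v) (a b : ℤ) (t : List (V × ℤ)) :
    Shuffle G (consSyllable u a (consSyllable v b t))
      (consSyllable v b (consSyllable u a t)) := by
  unfold consSyllable
  split_ifs
  all_goals first | exact .refl _ | exact .swap _ _ _ hadj

variable (G) [DecidableRel G.Adj] [DecidableEq V]

/-- The `v`-syllable that can be shuffled to the head (exponent `0` if there is none), and the
rest of the list. -/
def pop (v : V) : List (V × ℤ) → ℤ × List (V × ℤ)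
  | [] => (0, [])
  | (u, k) :: t =>
    if u = v then (k, t)
    else if G.Adj u v then ((pop v t).1, (u, k) :: (pop v t).2)
    else (0, (u, k) :: t)

variable {G}

@[simp] lemma pop_nil (v : V) : pop G v [] = (0, []) := rfl

@[simp] lemma pop_cons_self (v : V) (k : ℤ) (t : List (V × ℤ)) :
    pop G v ((v, k) :: t) = (k, t) := by
  simp [pop]

lemma pop_cons_of_adj {u v : V} (h : G.Adj u v) (k : ℤ) (t : List (V × ℤ)) :
    pop G v ((u, k) :: t) = ((pop G v t).1, (u, k) :: (pop G v t).2) := by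
  simp [pop, h.ne, h]

lemma pop_cons_of_not_adj {u v : V} (hne : u ≠ v) (h : ¬ G.Adj u v) (k : ℤ)
    (t : List (V × ℤ)) : pop G v ((u, k) :: t) = (0, (u, k) :: t) := by
  simp [pop, hne, h]

lemma pop_consSyllable_of_adj {u v : V} (h : G.Adj u v) (k : ℤ) (t : List (V × ℤ)) :
    pop G v (consSyllable u k t) = ((pop G v t).1, consSyllable u k (pop G v t).2) := by
  unfold consSyllable; split_ifs
  · rfl
  · exact pop_cons_of_adj h k t

lemma weight_pop (v : V) (s : List (V × ℤ)) :
    weight s = (pop G v s).1.natAbs + weight (pop G v s).2 := by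
  induction s with
  | nil => rfl
  | cons a t ih =>
    obtain ⟨u, k⟩ := a
    by_cases huv : u = v
    · subst huv; simp
    by_cases hadj : G.Adj u v
    · rw [pop_cons_of_adj hadj, weight_cons, weight_cons, ih]; omega
    · simp [pop_cons_of_not_adj huv hadj]

lemma pop_pop_comm {u v : V} (hadj : G.Adj u v) (s : List (V × ℤ)) :
    ∃ r, pop G u (pop G v s).2 = ((pop G u s).1, r) ∧
      pop G v (pop G u s).2 = ((pop G v s).1, r) := by
  induction s with
  | nil => exact ⟨[], rfl, rfl⟩
  | cons a t ih =>
    obtain ⟨w, m⟩ := a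
    by_cases hwv : w = v
    · subst hwv
      simp [pop_cons_of_adj hadj.symm]
    by_cases hwu : w = u
    · subst hwu
      simp [pop_cons_of_adj hadj]
    obtain ⟨r, h1, h2⟩ := ih
    by_cases hv : G.Adj w v <;> by_cases hu : G.Adj w u <;>
      simp [pop_cons_of_adj, pop_cons_of_not_adj, hwv, hwu, hv, hu, h1, h2]

lemma pop_fst_pop_snd_of_adj {u v : V} (hadj : G.Adj u v) (s : List (V × ℤ)) :
    (pop G v (pop G u s).2).1 = (pop G v s).1 := by
  obtain ⟨r, -, h⟩ := pop_pop_comm hadj s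
  rw [h]

lemma shuffle_pop {v : V} {s : List (V × ℤ)} (h : (pop G v s).1 ≠ 0) :
    Shuffle G ((v, (pop G v s).1) :: (pop G v s).2) s := by
  induction s with
  | nil => simp at h
  | cons a t ih =>
    obtain ⟨u, m⟩ := a
    by_cases huv : u = v
    · subst huv; simpa using .refl _
    by_cases hadj : G.Adj u v
    · rw [pop_cons_of_adj hadj] at h ⊢
      exact (Shuffle.swap _ _ _ hadj.symm).trans ((ih h).cons _)
    · simp [pop_cons_of_not_adj huv hadj] at h

lemma Shuffle.pop_congr {s t : List (V × ℤ)} (h : Shuffle G s t) (v : V) :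
    (pop G v s).1 = (pop G v t).1 ∧ Shuffle G (pop G v s).2 (pop G v t).2 := by
  induction h with
  | nil => exact ⟨rfl, .nil⟩
  | @cons a s t h ih =>
    obtain ⟨u, m⟩ := a
    by_cases huv : u = v
    · subst huv; simpa using h
    by_cases hadj : G.Adj u v
    · simp only [pop_cons_of_adj hadj]
      exact ⟨ih.1, ih.2.cons _⟩
    · simpa only [pop_cons_of_not_adj huv hadj, true_and] using h.cons _
  | swap a b s hab =>
    obtain ⟨u, m⟩ := a
    obtain ⟨u', m'⟩ := b
    simp only at hab
    by_cases hu : u = v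
    · subst hu
      simpa [pop_cons_of_adj hab.symm] using .refl _
    by_cases hu' : u' = v
    · subst hu'
      simpa [pop_cons_of_adj hab] using .refl _
    by_cases hv : G.Adj u v <;> by_cases hv' : G.Adj u' v <;>
      simpa [pop_cons_of_adj, pop_cons_of_not_adj, hu, hu', hv, hv'] using
        .swap (u, m) (u', m') _ hab
  | trans _ _ ih₁ ih₂ => exact ⟨ih₁.1.trans ih₂.1, ih₁.2.trans ih₂.2⟩

end Syllables

section Reduced

variable (G : SimpleGraph V) [DecidableRel G.Adj] [DecidableEq V] (N : V → ℕ)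

def IsReduced : List (V × ℤ) → Prop
  | [] => True
  | (u, k) :: t => k ≠ 0 ∧ centeredMod (N u) k = k ∧ (pop G u t).1 = 0 ∧ IsReduced t

def push (v : V) (e : ℤ) (s : List (V × ℤ)) : List (V × ℤ) :=
  consSyllable v (centeredMod (N v) ((pop G v s).1 + e)) (pop G v s).2

variable {G N}

lemma isReduced_consSyllable {v : V} {k : ℤ} {t : List (V × ℤ)}
    (hk : centeredMod (N v) k = k) (hv : (pop G v t).1 = 0) (ht : IsReduced G N t) :
    IsReduced G N (consSyllable v k t) := by
  unfold consSyllable; split_ifs with h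
  · exact ht
  · exact ⟨h, hk, hv, ht⟩

namespace IsReduced

variable {s : List (V × ℤ)}

lemma pop_snd_eq_self (hs : IsReduced G N s) {v : V} (h : (pop G v s).1 = 0) :
    (pop G v s).2 = s := by
  induction s with
  | nil => rfl
  | cons a t ih =>
    obtain ⟨u, k⟩ := a
    by_cases huv : u = v
    · subst huv; exact absurd (by simpa using h) hs.1
    by_cases hadj : G.Adj u v
    · rw [pop_cons_of_adj hadj] at h ⊢
      rw [ih hs.2.2.2 h]
    · rw [pop_cons_of_not_adj huv hadj]

lemma centeredMod_pop_fst (hs : IsReduced G N s) (v : V) :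
    centeredMod (N v) (pop G v s).1 = (pop G v s).1 := by
  induction s with
  | nil => exact centeredMod_zero_right _
  | cons a t ih =>
    obtain ⟨u, k⟩ := a
    by_cases huv : u = v
    · subst huv; simpa using hs.2.1
    by_cases hadj : G.Adj u v
    · rw [pop_cons_of_adj hadj]; exact ih hs.2.2.2
    · rw [pop_cons_of_not_adj huv hadj]; exact centeredMod_zero_right _

lemma pop_fst_pop_snd (hs : IsReduced G N s) (v : V) : (pop G v (pop G v s).2).1 = 0 := by
  induction s with
  | nil => rfl
  | cons a t ih =>
    obtain ⟨u, k⟩ := a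
    by_cases huv : u = v
    · subst huv; simpa using hs.2.2.1
    by_cases hadj : G.Adj u v
    · rw [pop_cons_of_adj hadj, pop_cons_of_adj hadj]; exact ih hs.2.2.2
    · rw [pop_cons_of_not_adj huv hadj, pop_cons_of_not_adj huv hadj]

lemma pop_snd (hs : IsReduced G N s) (v : V) : IsReduced G N (pop G v s).2 := by
  induction s with
  | nil => trivial
  | cons a t ih =>
    obtain ⟨u, k⟩ := a
    by_cases huv : u = v
    · subst huv; simpa using hs.2.2.2
    by_cases hadj : G.Adj u v
    · rw [pop_cons_of_adj hadj]
      exact ⟨hs.1, hs.2.1, (pop_fst_pop_snd_of_adj hadj.symm t).trans hs.2.2.1, ih hs.2.2.2⟩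
    · rw [pop_cons_of_not_adj huv hadj]; exact hs

lemma pop_consSyllable_self (ht : IsReduced G N s) {v : V} (hv : (pop G v s).1 = 0) (k : ℤ) :
    pop G v (consSyllable v k s) = (k, s) := by
  unfold consSyllable; split_ifs with hk
  · subst hk; exact Prod.ext hv (ht.pop_snd_eq_self hv)
  · exact pop_cons_self v k s

end IsReduced

lemma isReduced_push {v : V} (hv : 0 < N v) (e : ℤ) {s : List (V × ℤ)} (hs : IsReduced G N s) :
    IsReduced G N (push G N v e s) :=
  isReduced_consSyllable (centeredMod_centeredMod hv _) (hs.pop_fst_pop_snd v) (hs.pop_snd v)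

lemma push_push (v : V) (e e' : ℤ) {s : List (V × ℤ)} (hs : IsReduced G N s) :
    push G N v e' (push G N v e s) = push G N v (e + e') s := by
  rw [push, push, (hs.pop_snd v).pop_consSyllable_self (hs.pop_fst_pop_snd v), push,
    centeredMod_add_centeredMod, add_assoc]

lemma push_add_mul (v : V) (e j : ℤ) (s : List (V × ℤ)) :
    push G N v (e + N v * j) s = push G N v e s := by
  rw [push, push, ← add_assoc, centeredMod_add_mul]

lemma shuffle_push_zero (v : V) {s : List (V × ℤ)} (hs : IsReduced G N s) :
    Shuffle G (push G N v 0 s) s := by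
  rw [push, add_zero, hs.centeredMod_pop_fst, consSyllable]
  split_ifs with h
  · rw [hs.pop_snd_eq_self h]
    exact .refl s
  · exact shuffle_pop h

lemma Shuffle.push_congr {s t : List (V × ℤ)} (h : Shuffle G s t) (v : V) (e : ℤ) :
    Shuffle G (push G N v e s) (push G N v e t) := by
  rw [push, push, (h.pop_congr v).1]
  exact (h.pop_congr v).2.consSyllable_congr _ _

lemma shuffle_push_comm {u v : V} (hadj : G.Adj u v) (a b : ℤ) (s : List (V × ℤ)) :
    Shuffle G (push G N u a (push G N v b s)) (push G N v b (push G N u a s)) := by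
  obtain ⟨r, hu, hv⟩ := pop_pop_comm hadj s
  simp only [push, pop_consSyllable_of_adj hadj, pop_consSyllable_of_adj hadj.symm, hu, hv]
  exact shuffle_consSyllable_comm hadj _ _ r

lemma weight_push_le {v : V} (hv : 0 < N v) (e : ℤ) (s : List (V × ℤ)) :
    weight (push G N v e s) ≤ weight s + e.natAbs := by
  rw [push, weight_consSyllable, weight_pop (G := G) v s]
  have := natAbs_centeredMod_le hv ((pop G v s).1 + e)
  omega

end Reduced

section Action

variable (G : SimpleGraph V) [DecidableRel G.Adj] [DecidableEq V] (N : V → ℕ)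

def reducedShuffleSetoid : Setoid {s : List (V × ℤ) // IsReduced G N s} where
  r s t := Shuffle G s.1 t.1
  iseqv := ⟨fun _ => .refl _, Shuffle.symm, Shuffle.trans⟩

abbrev NormalForm := Quotient (reducedShuffleSetoid G N)

def NormalForm.nil : NormalForm G N := ⟦⟨[], trivial⟩⟧

def NormalForm.weight : NormalForm G N → ℕ :=
  Quotient.lift (fun s => NumberedGraphProduct.weight s.1) fun _ _ h => h.weight_eq

variable {N} (hN : ∀ v, 0 < N v)

def pushNF (v : V) (e : ℤ) : NormalForm G N → NormalForm G N :=
  Quotient.map (fun s => ⟨push G N v e s.1, isReduced_push (hN v) e s.2⟩)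
    fun _ _ h => h.push_congr v e

variable {G}

lemma pushNF_mk (v : V) (e : ℤ) (s : {s : List (V × ℤ) // IsReduced G N s}) :
    pushNF G hN v e ⟦s⟧ = ⟦⟨push G N v e s.1, isReduced_push (hN v) e s.2⟩⟧ := rfl

lemma pushNF_pushNF (v : V) (e e' : ℤ) (x : NormalForm G N) :
    pushNF G hN v e' (pushNF G hN v e x) = pushNF G hN v (e + e') x := by
  induction x using Quotient.ind with
  | _ s => simp only [pushNF_mk, push_push v e e' s.2]

lemma pushNF_zero (v : V) (x : NormalForm G N) : pushNF G hN v 0 x = x := by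
  induction x using Quotient.ind with
  | _ s => exact Quotient.sound (shuffle_push_zero v s.2)

lemma pushNF_comm {u v : V} (hadj : G.Adj u v) (a b : ℤ) (x : NormalForm G N) :
    pushNF G hN u a (pushNF G hN v b x) = pushNF G hN v b (pushNF G hN u a x) := by
  induction x using Quotient.ind with
  | _ s => exact Quotient.sound (shuffle_push_comm hadj a b s.1)

lemma pushNF_add_mul (v : V) (e j : ℤ) (x : NormalForm G N) :
    pushNF G hN v (e + N v * j) x = pushNF G hN v e x := by
  induction x using Quotient.ind with
  | _ s => simp only [pushNF_mk, push_add_mul]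

lemma weight_pushNF_le (v : V) (e : ℤ) (x : NormalForm G N) :
    (pushNF G hN v e x).weight ≤ x.weight + e.natAbs := by
  induction x using Quotient.ind with
  | _ s => exact weight_push_le (hN v) e s.1

variable (G)

def generatorPerm (v : V) : Equiv.Perm (NormalForm G N) where
  toFun := pushNF G hN v 1
  invFun := pushNF G hN v (-1)
  left_inv x := by rw [pushNF_pushNF, add_neg_cancel, pushNF_zero]
  right_inv x := by rw [pushNF_pushNF, neg_add_cancel, pushNF_zero]

variable {G}

lemma generatorPerm_zpow_apply (v : V) (e : ℤ) (x : NormalForm G N) :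
    (generatorPerm G hN v ^ e) x = pushNF G hN v e x := by
  induction e using Int.induction_on generalizing x with
  | zero => rw [zpow_zero, pushNF_zero]; rfl
  | succ e ih =>
    rw [zpow_add_one, Equiv.Perm.mul_apply, ih, add_comm]
    exact pushNF_pushNF hN v 1 e x
  | pred e ih =>
    rw [zpow_sub_one, Equiv.Perm.mul_apply, ih, sub_eq_neg_add]
    exact pushNF_pushNF hN v (-1) _ x

lemma generatorPerm_pow_self (v : V) : generatorPerm G hN v ^ N v = 1 := by
  ext x
  rw [← zpow_natCast, generatorPerm_zpow_apply, ← zero_add (N v : ℤ), ← mul_one (N v : ℤ),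
    pushNF_add_mul, pushNF_zero]
  rfl

lemma generatorPerm_commute {u v : V} (hadj : G.Adj u v) :
    Commute (generatorPerm G hN u) (generatorPerm G hN v) := by
  ext x
  exact pushNF_comm hN hadj 1 1 x

variable (G)

def toPerm : NGP G N →* (Equiv.Perm (NormalForm G N))ᵐᵒᵖ :=
  PresentedGroup.toGroup (f := fun v => MulOpposite.op (generatorPerm G hN v)) <| by
    rintro r (⟨v, rfl⟩ | ⟨u, v, hadj, rfl⟩)
    · rw [map_pow, FreeGroup.lift_apply_of, ← MulOpposite.op_pow, generatorPerm_pow_self,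
        MulOpposite.op_one]
    · simp only [map_mul, map_inv, FreeGroup.lift_apply_of,
        ((generatorPerm_commute hN hadj).op).eq, mul_inv_cancel_right, mul_inv_cancel]

variable {G}

lemma toPerm_mul_of_zpow_apply (g : NGP G N) (u : V) (e : ℤ) (x : NormalForm G N) :
    (toPerm G hN (g * PresentedGroup.of u ^ e)).unop x =
      pushNF G hN u e ((toPerm G hN g).unop x) := by
  rw [map_mul, MulOpposite.unop_mul, Equiv.Perm.mul_apply, map_zpow, toPerm,
    PresentedGroup.toGroup.of, MulOpposite.unop_zpow, MulOpposite.unop_op,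
    generatorPerm_zpow_apply]

end Action

section Group

variable (G : SimpleGraph V) (N : V → ℕ)

lemma of_pow_self (v : V) : (PresentedGroup.of v : NGP G N) ^ N v = 1 := by
  rw [PresentedGroup.of, ← map_pow]
  exact PresentedGroup.one_of_mem (Or.inl ⟨v, rfl⟩)

lemma of_zpow_centeredMod (v : V) (x : ℤ) :
    (PresentedGroup.of v : NGP G N) ^ centeredMod (N v) x = PresentedGroup.of v ^ x := by
  obtain ⟨j, hj⟩ := exists_centeredMod_eq_add_mul (n := N v) x
  rw [hj, zpow_add, zpow_mul, zpow_natCast, of_pow_self, one_zpow, mul_one]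

variable {G}

lemma of_commute {u v : V} (hadj : G.Adj u v) :
    Commute (PresentedGroup.of u : NGP G N) (PresentedGroup.of v) := by
  have h := PresentedGroup.one_of_mem (rels := ngpRels G N) (Or.inr ⟨u, v, hadj, rfl⟩)
  simp only [map_mul, map_inv] at h
  exact mul_inv_eq_iff_eq_mul.mp (mul_inv_eq_one.mp h)

end Group

section Words

variable (G : SimpleGraph V) (N : V → ℕ)

def letterSign (l : V × Bool) : ℤ := if l.2 then 1 else -1

lemma natAbs_letterSign (l : V × Bool) : (letterSign l).natAbs = 1 := by
  unfold letterSign; split_ifs <;> rfl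

def powWord (v : V) (k : ℤ) : List (V × Bool) := List.replicate k.natAbs (v, decide (0 ≤ k))

lemma evalWord_eq_prod (w : List (V × Bool)) :
    evalWord G N w = (w.map fun l => PresentedGroup.of l.1 ^ letterSign l).prod := by
  unfold evalWord letterSign
  congr 1
  refine List.map_congr_left fun l _ => ?_
  split_ifs <;> simp

lemma evalWord_append_singleton (w : List (V × Bool)) (l : V × Bool) :
    evalWord G N (w ++ [l]) = evalWord G N w * PresentedGroup.of l.1 ^ letterSign l := by
  simp [evalWord_eq_prod]

lemma evalWord_append (w w' : List (V × Bool)) :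
    evalWord G N (w ++ w') = evalWord G N w * evalWord G N w' := by
  simp [evalWord_eq_prod]

lemma evalWord_powWord (v : V) (k : ℤ) :
    evalWord G N (powWord v k) = PresentedGroup.of v ^ k := by
  rw [evalWord_eq_prod, powWord, List.map_replicate, List.prod_replicate, ← zpow_natCast,
    ← zpow_mul]
  congr 1
  unfold letterSign
  split_ifs with h <;> simp at h <;> omega

@[simp] lemma length_powWord (v : V) (k : ℤ) : (powWord v k).length = k.natAbs :=
  List.length_replicate

variable {N}

lemma validWord_append {w w' : List (V × Bool)} :
    ValidWord N (w ++ w') ↔ ValidWord N w ∧ ValidWord N w' := by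
  simp only [ValidWord, List.mem_append, or_imp, forall_and]

lemma validWord_powWord {v : V} {k : ℤ} (h : k < 0 → N v ≠ 2) : ValidWord N (powWord v k) := by
  intro l hl hneg
  obtain ⟨-, rfl⟩ := List.mem_replicate.mp hl
  exact h (by simpa using hneg)

end Words

lemma isPoweredClique_zero {G : SimpleGraph V} {N : V → ℕ} : IsPoweredClique G N fun _ => 0 :=
  ⟨fun _ hx => absurd rfl hx, fun _ => ⟨fun _ => by simp, fun _ => by simp; omega⟩⟩

section Automaton

variable (G : SimpleGraph V) [DecidableRel G.Adj] [DecidableEq V] (N : V → ℕ)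

def CanStep (f : V → ℤ) (l : V × Bool) : Prop :=
  ValidWord N [l] ∧ (f l.1 + letterSign l).natAbs = (f l.1).natAbs + 1 ∧
    (f l.1 + letterSign l).natAbs ≤ N l.1 / 2

def stepState (f : V → ℤ) (u : V) (e : ℤ) : V → ℤ :=
  fun x => if x = u then f u + e else if G.Adj u x then f x else 0

variable {G N}

lemma step_eq_some_iff {f g : V → ℤ} {l : V × Bool} :
    step G N f l = some g ↔ CanStep N f l ∧ stepState G f l.1 (letterSign l) = g := by
  obtain ⟨u, b⟩ := l
  cases b <;> simp [step, CanStep, ValidWord, letterSign, sub_eq_add_neg] <;>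
    exact and_congr_left fun _ => by omega

lemma step_eq_none_iff {f : V → ℤ} {l : V × Bool} :
    step G N f l = none ↔ ¬ CanStep N f l := by
  obtain ⟨u, b⟩ := l
  cases b <;> simp [step, CanStep, ValidWord, letterSign] <;> omega

lemma run_cons (f : V → ℤ) (l : V × Bool) (w : List (V × Bool)) :
    run G N f (l :: w) = (step G N f l).bind (run G N · w) := by
  rw [run]; cases step G N f l <;> rfl

lemma run_append_singleton (f : V → ℤ) (w : List (V × Bool)) (l : V × Bool) :
    run G N f (w ++ [l]) = (run G N f w).bind (step G N · l) := by
  induction w generalizing f with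
  | nil => simp [run_cons, run]
  | cons l' w ih => rw [List.cons_append, run_cons, run_cons]; cases step G N f l' <;> simp [ih]

lemma exists_step_eq_none_of_run_eq_none {f : V → ℤ} {w : List (V × Bool)}
    (h : run G N f w = none) :
    ∃ p l r g, w = p ++ l :: r ∧ run G N f p = some g ∧ step G N g l = none := by
  induction w generalizing f with
  | nil => simp [run] at h
  | cons l w ih =>
    rw [run_cons] at h
    cases hs : step G N f l with
    | none => exact ⟨[], l, w, f, rfl, rfl, hs⟩
    | some g =>
      rw [hs, Option.bind_some] at h
      obtain ⟨p, l', r, g', rfl, hp, hl'⟩ := ih h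
      exact ⟨l :: p, l', r, g', rfl, by rw [run_cons, hs, Option.bind_some, hp], hl'⟩

lemma validWord_of_run_eq_some {f g : V → ℤ} {w : List (V × Bool)}
    (h : run G N f w = some g) : ValidWord N w := by
  induction w generalizing f with
  | nil => simp [ValidWord]
  | cons l w ih =>
    rw [run_cons, Option.bind_eq_some_iff] at h
    obtain ⟨f', hs, hw⟩ := h
    exact validWord_append (w := [l]).mpr ⟨(step_eq_some_iff.mp hs).1.1, ih hw⟩

lemma isPoweredClique_stepState {f : V → ℤ} (hf : IsPoweredClique G N f) {l : V × Bool}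
    (hl : CanStep N f l) : IsPoweredClique G N (stepState G f l.1 (letterSign l)) := by
  obtain ⟨u, b⟩ := l
  obtain ⟨hvalid, hgrow, hbound⟩ := hl
  have hsupp : {x | stepState G f u (letterSign (u, b)) x ≠ 0} ⊆
      insert u ({x | f x ≠ 0} ∩ G.neighborSet u) := by
    intro x hx
    simp only [stepState, ne_eq, Set.mem_ofPred_eq] at hx
    split_ifs at hx with h₁ h₂
    · exact .inl h₁
    · exact .inr ⟨hx, h₂⟩
    · exact absurd rfl hx
  refine ⟨(SimpleGraph.isClique_insert.mpr ⟨hf.1.subset Set.inter_subset_left,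
    fun x hx _ => hx.2⟩).subset hsupp, fun x => ?_⟩
  simp only [stepState]
  split_ifs with h₁ h₂
  · subst h₁
    have : b = false → N x ≠ 2 := hvalid (x, b) (List.mem_singleton_self _)
    cases b <;> simp [letterSign] at hgrow hbound this ⊢ <;> omega
  · exact hf.2 x
  · omega

lemma isPoweredClique_of_run_eq_some {f g : V → ℤ} (hf : IsPoweredClique G N f)
    {w : List (V × Bool)} (h : run G N f w = some g) : IsPoweredClique G N g := by
  induction w generalizing f with
  | nil => exact Option.some.inj h ▸ hf
  | cons l w ih =>
    rw [run_cons, Option.bind_eq_some_iff] at h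
    obtain ⟨f', hs, hw⟩ := h
    obtain ⟨hl, rfl⟩ := step_eq_some_iff.mp hs
    exact ih (isPoweredClique_stepState hf hl) hw

end Automaton

section Geodesics

variable {G : SimpleGraph V} [DecidableRel G.Adj] [DecidableEq V] {N : V → ℕ}

lemma exists_evalWord_eq_mul_zpow {w : List (V × Bool)} {f : V → ℤ}
    (hrun : run G N (fun _ => 0) w = some f) (v : V) :
    ∃ r, ValidWord N r ∧ evalWord G N w = evalWord G N r * PresentedGroup.of v ^ f v ∧
      r.length + (f v).natAbs = w.length := by
  induction w using List.reverseRecOn generalizing f with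
  | nil => cases hrun; exact ⟨[], fun _ h => by simp at h, by simp [evalWord], rfl⟩
  | append_singleton w l ih =>
    rw [run_append_singleton, Option.bind_eq_some_iff] at hrun
    obtain ⟨f₀, hrun₀, hstep⟩ := hrun
    obtain ⟨⟨hl, hgrow, -⟩, rfl⟩ := step_eq_some_iff.mp hstep
    obtain ⟨r, hr, heval, hlen⟩ := ih hrun₀
    rw [evalWord_append_singleton, List.length_append, List.length_singleton]
    simp only [stepState]
    split_ifs with hvu hadj
    · subst hvu
      exact ⟨r, hr, by rw [heval, mul_assoc, ← zpow_add], by omega⟩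
    · refine ⟨r ++ [l], validWord_append.mpr ⟨hr, hl⟩, ?_, by simp; omega⟩
      rw [heval, evalWord_append_singleton, mul_assoc, mul_assoc,
        ((of_commute N hadj).symm.zpow_zpow _ _).eq]
    · exact ⟨w ++ [l], validWord_append.mpr ⟨validWord_of_run_eq_some hrun₀, hl⟩,
        by simp [evalWord_append_singleton], by simp⟩

lemma exists_shorter_of_run_eq_none (hN : ∀ v, 0 < N v) {w : List (V × Bool)}
    (hw : ValidWord N w) (hrun : run G N (fun _ => 0) w = none) :
    ∃ w', ValidWord N w' ∧ evalWord G N w' = evalWord G N w ∧ w'.length < w.length := by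
  obtain ⟨p, ⟨u, b⟩, rest, f, rfl, hp, hstep⟩ := exists_step_eq_none_of_run_eq_none hrun
  obtain ⟨r, hr, heval, hlen⟩ := exists_evalWord_eq_mul_zpow hp u
  obtain ⟨-, hl, hrest⟩ : ValidWord N p ∧ ValidWord N [(u, b)] ∧ ValidWord N rest := by
    rwa [← List.singleton_append, validWord_append, validWord_append] at hw
  set x := centeredMod (N u) (f u + letterSign (u, b))
  have hx : x.natAbs ≤ (f u).natAbs :=
    natAbs_centeredMod_add_le (hN u) (natAbs_letterSign _)
      fun h => step_eq_none_iff.mp hstep ⟨hl, h⟩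
  have hx₂ : x < 0 → N u ≠ 2 := fun hneg h2 => by
    have := centeredMod_two_nonneg (f u + letterSign (u, b))
    rw [← h2] at this
    omega
  refine ⟨r ++ powWord u x ++ rest, validWord_append.mpr ⟨validWord_append.mpr
    ⟨hr, validWord_powWord hx₂⟩, hrest⟩, ?_, by simp; omega⟩
  rw [← List.singleton_append, ← List.append_assoc, evalWord_append, evalWord_append,
    evalWord_append, evalWord_powWord, of_zpow_centeredMod, evalWord_append_singleton, heval,
    zpow_add]
  simp only [mul_assoc]

lemma weight_toPerm_evalWord_le (hN : ∀ v, 0 < N v) (w : List (V × Bool)) :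
    ((toPerm G hN (evalWord G N w)).unop (NormalForm.nil G N)).weight ≤ w.length := by
  induction w using List.reverseRecOn with
  | nil => simp [evalWord]; rfl
  | append_singleton w l ih =>
    rw [evalWord_append_singleton, toPerm_mul_of_zpow_apply, List.length_append,
      List.length_singleton]
    have := weight_pushNF_le hN l.1 (letterSign l)
      ((toPerm G hN (evalWord G N w)).unop (NormalForm.nil G N))
    rw [natAbs_letterSign] at this
    omega

lemma exists_isReduced_of_run_eq_some (hN : ∀ v, 0 < N v) {w : List (V × Bool)} {f : V → ℤ}
    (hrun : run G N (fun _ => 0) w = some f) :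
    ∃ s, ∃ hs : IsReduced G N s,
      (toPerm G hN (evalWord G N w)).unop (NormalForm.nil G N) = ⟦⟨s, hs⟩⟧ ∧
      weight s = w.length ∧ ∀ v, (pop G v s).1 = centeredMod (N v) (f v) := by
  induction w using List.reverseRecOn generalizing f with
  | nil =>
    cases hrun
    exact ⟨[], trivial, by simp [evalWord]; rfl, rfl, fun v => (centeredMod_zero_right _).symm⟩
  | append_singleton w l ih =>
    rw [run_append_singleton, Option.bind_eq_some_iff] at hrun
    obtain ⟨f₀, hrun₀, hstep⟩ := hrun
    obtain ⟨⟨-, hgrow, hbound⟩, rfl⟩ := step_eq_some_iff.mp hstep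
    obtain ⟨s, hs, hact, hweight, hpop⟩ := ih hrun₀
    obtain ⟨u, b⟩ := l
    simp only at hgrow hbound
    set K := centeredMod (N u) (f₀ u + letterSign (u, b))
    have hK : K.natAbs = (f₀ u + letterSign (u, b)).natAbs :=
      natAbs_centeredMod_of_le_half (hN u) hbound
    have hpush : push G N u (letterSign (u, b)) s = (u, K) :: (pop G u s).2 := by
      rw [push, hpop u, centeredMod_add_centeredMod, consSyllable, if_neg (by omega)]
    refine ⟨_, isReduced_push (hN u) (letterSign (u, b)) hs, ?_, ?_, fun v => ?_⟩
    · rw [evalWord_append_singleton, toPerm_mul_of_zpow_apply, hact]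
      rfl
    · have hs_weight : weight s = (f₀ u).natAbs + weight (pop G u s).2 := by
        rw [weight_pop (G := G) u s, hpop u, natAbs_centeredMod_of_le_half (hN u) (by omega)]
      rw [hpush, weight_cons, List.length_append, List.length_singleton, ← hweight, hs_weight]
      simp only at hK ⊢
      omega
    · rw [hpush]
      simp only [stepState]
      split_ifs with hvu hadj
      · subst hvu; simp [K]
      · rw [pop_cons_of_adj hadj, pop_fst_pop_snd_of_adj hadj, hpop v]
      · rw [pop_cons_of_not_adj (Ne.symm hvu) hadj, centeredMod_zero_right]

lemma length_le_of_run_eq_some (hN : ∀ v, 0 < N v) {w : List (V × Bool)} {f : V → ℤ}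
    (hrun : run G N (fun _ => 0) w = some f) {w' : List (V × Bool)}
    (heq : evalWord G N w' = evalWord G N w) : w.length ≤ w'.length := by
  obtain ⟨s, hs, hact, hweight, -⟩ := exists_isReduced_of_run_eq_some hN hrun
  calc w.length = weight s := hweight.symm
    _ = ((toPerm G hN (evalWord G N w')).unop (NormalForm.nil G N)).weight := by
      rw [heq, hact]; rfl
    _ ≤ w'.length := weight_toPerm_evalWord_le hN w'

lemma accepts_of_isGeodesic (hN : ∀ v, 0 < N v) {w : List (V × Bool)}
    (hw : IsGeodesic G N w) : Accepts G N (fun _ => 0) w := by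
  cases hrun : run G N (fun _ => 0) w with
  | none =>
    obtain ⟨w', hw', heq, hlt⟩ := exists_shorter_of_run_eq_none hN hw.1 hrun
    exact absurd (hw.2 w' hw' heq) (by omega)
  | some g => exact ⟨g, hrun, isPoweredClique_of_run_eq_some isPoweredClique_zero hrun⟩

lemma isGeodesic_of_accepts (hN : ∀ v, 0 < N v) {w : List (V × Bool)}
    (hw : Accepts G N (fun _ => 0) w) : IsGeodesic G N w := by
  obtain ⟨g, hrun, -⟩ := hw
  exact ⟨validWord_of_run_eq_some hrun, fun w' _ heq => length_le_of_run_eq_some hN hrun heq⟩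

end Geodesics

end NumberedGraphProduct

theorem stmt1_general [DecidableEq V] (G : SimpleGraph V) [DecidableRel G.Adj]
    (N : V → ℕ) (hN : ∀ v, 2 ≤ N v) (w : List (V × Bool)) :
    IsGeodesic G N w ↔ Accepts G N (fun _ => 0) w := by
  have hN₀ : ∀ v, 0 < N v := fun v => Nat.zero_lt_of_lt (hN v)
  exact ⟨NumberedGraphProduct.accepts_of_isGeodesic hN₀,
    NumberedGraphProduct.isGeodesic_of_accepts hN₀⟩

theorem stmt1 [Fintype V] [DecidableEq V] (G : SimpleGraph V) [DecidableRel G.Adj]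
    (N : V → ℕ) (hN : ∀ v, 2 ≤ N v) (w : List (V × Bool)) :
    IsGeodesic G N w ↔ Accepts G N (fun _ => 0) w :=
  stmt1_general G N hN w
end

section
/- Let (Γ, N) be a link-regular numbered graph. Suppose σ and σ' are cliques of Γ with N(σ) = N(σ'). Then for any subcliques τ ⊆ σ and τ' ⊆ σ' with N(τ) = N(τ'), one has N(Lk(σ; τ)) = N(Lk(σ'; τ')) as multisets. -/
variable {V : Type*}

/-- The link of a finite set of vertices `σ`: vertices `v ∉ σ` with `σ ∪ {v}` a clique. -/
noncomputable def lk [Fintype V] (G : SimpleGraph V) (σ : Finset V) : Finset V :=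
  Set.Finite.toFinset (Set.toFinite {v : V | v ∉ σ ∧ G.IsClique (insert v (σ : Set V))})

/-- `Lk(σ; τ)`: vertices `v ∉ σ` with `Lk(v) ∩ σ = τ`. -/
noncomputable def lkIn [Fintype V] (G : SimpleGraph V) (σ τ : Finset V) : Finset V :=
  Set.Finite.toFinset (Set.toFinite
    {v : V | v ∉ σ ∧ G.neighborSet v ∩ (σ : Set V) = (τ : Set V)})

/-- `N(U)`: the multiset of vertex numbers of a finite set of vertices. -/
def NM (N : V → ℕ) (U : Finset V) : Multiset ℕ := U.val.map N

/-- Link-regularity of a numbered graph. -/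
def LinkRegular [Fintype V] (G : SimpleGraph V) (N : V → ℕ) : Prop :=
  ∀ σ₁ σ₂ : Finset V, G.IsClique (σ₁ : Set V) → G.IsClique (σ₂ : Set V) →
    NM N σ₁ = NM N σ₂ → NM N (lk G σ₁) = NM N (lk G σ₂)

open Finset

lemma mem_lk' [Fintype V] {G : SimpleGraph V} {σ : Finset V} {v : V} :
    v ∈ lk G σ ↔ v ∉ σ ∧ G.IsClique (insert v (σ : Set V)) := by
  simp [lk]

lemma mem_lkIn' [Fintype V] {G : SimpleGraph V} {σ τ : Finset V} {v : V} :
    v ∈ lkIn G σ τ ↔ v ∉ σ ∧ G.neighborSet v ∩ (σ : Set V) = (τ : Set V) := by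
  simp [lkIn]

lemma NM_count [DecidableEq V] (N : V → ℕ) (U : Finset V) (n : ℕ) :
    (NM N U).count n = (U.filter fun v => n = N v).card := by
  rw [NM, Multiset.count_map]
  rfl

def Fn [DecidableEq V] (N : V → ℕ) (n : ℕ) (U : Finset V) : ℤ :=
  ((U.filter fun v => n = N v).card : ℤ)

lemma Fn_congr [DecidableEq V] {N : V → ℕ} {n : ℕ} {U W : Finset V}
    (h : NM N U = NM N W) : Fn N n U = Fn N n W := by
  unfold Fn
  rw [← NM_count, ← NM_count, h]

lemma NM_union [DecidableEq V] {N : V → ℕ} {τ η : Finset V} (h : Disjoint τ η) :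
    NM N (τ ∪ η) = NM N τ + NM N η := by
  rw [← Finset.disjUnion_eq_union τ η h]
  simp [NM, Finset.disjUnion]

lemma NM_sdiff_add [DecidableEq V] {N : V → ℕ} {τ σ : Finset V} (h : τ ⊆ σ) :
    NM N σ = NM N τ + NM N (σ \ τ) := by
  rw [← NM_union Finset.disjoint_sdiff, Finset.union_sdiff_of_subset h]

lemma NM_image [DecidableEq V] {N : V → ℕ} {g : V → V} {η : Finset V}
    (h1 : Set.InjOn g η) (h2 : ∀ x ∈ η, N (g x) = N x) :
    NM N (η.image g) = NM N η := by
  rw [NM, Finset.image_val_of_injOn h1, Multiset.map_map, NM]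
  exact Multiset.map_congr rfl (fun x hx => h2 x hx)

lemma Fn_sdiff [DecidableEq V] {N : V → ℕ} {n : ℕ} {A B : Finset V} (h : B ⊆ A) :
    Fn N n (A \ B) = Fn N n A - Fn N n B := by
  unfold Fn
  have hf : (A \ B).filter (fun v => n = N v)
      = A.filter (fun v => n = N v) \ B.filter (fun v => n = N v) := by
    ext x; simp only [mem_filter, mem_sdiff]; tauto
  rw [hf, Finset.card_sdiff_of_subset (filter_subset_filter _ h),
    Nat.cast_sub (Finset.card_le_card (filter_subset_filter _ h))]

lemma Fn_sdiff' [DecidableEq V] {N : V → ℕ} {n : ℕ} (A B : Finset V) :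
    Fn N n (A \ B) = Fn N n A - Fn N n (A ∩ B) := by
  rw [← Finset.sdiff_inter_self_left A B]
  exact Fn_sdiff Finset.inter_subset_left

lemma Fn_eq_sum [Fintype V] [DecidableEq V] {N : V → ℕ} {n : ℕ} (U : Finset V) :
    Fn N n U = ∑ v : V, if v ∈ U ∧ n = N v then (1 : ℤ) else 0 := by
  rw [Finset.sum_boole]
  unfold Fn
  congr 2
  ext x
  simp [and_comm]

lemma core_ie [DecidableEq V] (σ τ s : Finset V) (hτ : τ ⊆ σ) :
    (if s ∩ σ = τ then (1 : ℤ) else 0)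
      = ∑ η ∈ (σ \ τ).powerset, (-1 : ℤ) ^ η.card * (if τ ∪ η ⊆ s then 1 else 0) := by
  by_cases hts : τ ⊆ s
  · have h1 : ∀ η : Finset V, (τ ∪ η ⊆ s) ↔ η ⊆ s := fun η => by
      rw [Finset.union_subset_iff]; simp [hts]
    have h2 : ∑ η ∈ (σ \ τ).powerset, (-1 : ℤ) ^ η.card * (if τ ∪ η ⊆ s then 1 else 0)
        = ∑ η ∈ ((σ \ τ) ∩ s).powerset, (-1 : ℤ) ^ η.card := by
      rw [← Finset.sum_subset (Finset.powerset_mono.mpr Finset.inter_subset_left)]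
      · refine Finset.sum_congr rfl fun η hη => ?_
        rw [if_pos ((h1 η).mpr ((Finset.mem_powerset.mp hη).trans Finset.inter_subset_right)),
          mul_one]
      · intro η hη hη2
        rw [if_neg, mul_zero]
        intro hηs
        exact hη2 (Finset.mem_powerset.mpr
          (Finset.subset_inter (Finset.mem_powerset.mp hη) ((h1 η).mp hηs)))
    rw [h2, Finset.sum_powerset_neg_one_pow_card]
    have hiff : (s ∩ σ = τ) ↔ ((σ \ τ) ∩ s = ∅) := by
      constructor
      · intro h
        rw [Finset.eq_empty_iff_forall_notMem]
        intro x hx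
        rw [Finset.mem_inter, Finset.mem_sdiff] at hx
        have : x ∈ s ∩ σ := Finset.mem_inter.mpr ⟨hx.2, hx.1.1⟩
        rw [h] at this
        exact hx.1.2 this
      · intro h
        apply Finset.Subset.antisymm
        · intro x hx
          by_contra hxτ
          have hxm : x ∈ (σ \ τ) ∩ s := by
            rw [Finset.mem_inter, Finset.mem_sdiff]
            rw [Finset.mem_inter] at hx
            exact ⟨⟨hx.2, hxτ⟩, hx.1⟩
          rw [h] at hxm
          exact absurd hxm (Finset.notMem_empty x)
        · exact Finset.subset_inter hts hτ
    exact if_congr hiff rfl rfl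
  · have : ¬(s ∩ σ = τ) := fun he => hts (by rw [← he]; exact Finset.inter_subset_left)
    rw [if_neg this]
    refine (Finset.sum_eq_zero fun η _ => ?_).symm
    rw [if_neg (fun hsub => hts (Finset.subset_union_left.trans hsub)), mul_zero]

noncomputable def nbr [Fintype V] (G : SimpleGraph V) (v : V) : Finset V :=
  Set.Finite.toFinset (Set.toFinite (G.neighborSet v))

lemma mem_nbr [Fintype V] {G : SimpleGraph V} {v w : V} :
    w ∈ nbr G v ↔ G.Adj v w := by
  simp [nbr]

lemma coe_nbr [Fintype V] (G : SimpleGraph V) (v : V) :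
    (nbr G v : Set V) = G.neighborSet v := by
  simp [nbr]

lemma mem_lk_iff [Fintype V] {G : SimpleGraph V} {ρ : Finset V} {v : V}
    (hρ : G.IsClique (ρ : Set V)) (hv : v ∉ ρ) :
    v ∈ lk G ρ ↔ ρ ⊆ nbr G v := by
  rw [mem_lk', and_iff_right hv, SimpleGraph.isClique_insert]
  constructor
  · rintro ⟨-, h⟩ x hx
    rw [mem_nbr]
    exact h x (Finset.mem_coe.mpr hx) (fun he => hv (by rw [he]; exact hx))
  · intro h
    exact ⟨hρ, fun b hb _ => mem_nbr.mp (h (Finset.mem_coe.mp hb))⟩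

lemma lk_inter [Fintype V] [DecidableEq V] {G : SimpleGraph V} {σ ρ : Finset V}
    (hσ : G.IsClique (σ : Set V)) (hρ : ρ ⊆ σ) :
    lk G ρ ∩ σ = σ \ ρ := by
  ext v
  rw [Finset.mem_inter, Finset.mem_sdiff, mem_lk']
  constructor
  · rintro ⟨⟨hvρ, -⟩, hvσ⟩
    exact ⟨hvσ, hvρ⟩
  · rintro ⟨hvσ, hvρ⟩
    refine ⟨⟨hvρ, hσ.subset ?_⟩, hvσ⟩
    rw [Set.insert_subset_iff]
    exact ⟨Finset.mem_coe.mpr hvσ, Finset.coe_subset.mpr hρ⟩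

lemma stepB [Fintype V] [DecidableEq V] {G : SimpleGraph V} (N : V → ℕ) (n : ℕ)
    {σ ρ : Finset V} (hσ : G.IsClique (σ : Set V)) (hρ : ρ ⊆ σ) :
    Fn N n (lk G ρ \ σ) = Fn N n (lk G ρ) - Fn N n σ + Fn N n ρ := by
  rw [Fn_sdiff' (lk G ρ) σ, lk_inter hσ hρ, Fn_sdiff hρ]
  ring

lemma stepA [Fintype V] [DecidableEq V] {G : SimpleGraph V} (N : V → ℕ) (n : ℕ)
    {σ τ : Finset V} (hσ : G.IsClique (σ : Set V)) (hτ : τ ⊆ σ) :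
    Fn N n (lkIn G σ τ)
      = ∑ η ∈ (σ \ τ).powerset, (-1 : ℤ) ^ η.card * Fn N n (lk G (τ ∪ η) \ σ) := by
  have hswap : ∑ η ∈ (σ \ τ).powerset, (-1 : ℤ) ^ η.card * Fn N n (lk G (τ ∪ η) \ σ)
      = ∑ v : V, ∑ η ∈ (σ \ τ).powerset,
          (-1 : ℤ) ^ η.card * (if v ∈ lk G (τ ∪ η) \ σ ∧ n = N v then 1 else 0) := by
    rw [Finset.sum_comm]
    exact Finset.sum_congr rfl fun η _ => by
      rw [Fn_eq_sum (lk G (τ ∪ η) \ σ), Finset.mul_sum]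
  rw [hswap, Fn_eq_sum]
  refine Finset.sum_congr rfl fun v _ => ?_
  by_cases hn : n = N v
  swap
  · simp [hn]
  by_cases hvσ : v ∈ σ
  · have h1 : v ∉ lkIn G σ τ := fun h => (mem_lkIn'.mp h).1 hvσ
    simp [h1, hvσ, Finset.mem_sdiff]
  · simp only [hn, eq_self_iff_true, and_true]
    have hlkIn : v ∈ lkIn G σ τ ↔ nbr G v ∩ σ = τ := by
      rw [mem_lkIn', and_iff_right hvσ, ← coe_nbr, ← Finset.coe_inter, Finset.coe_inj]
    rw [if_congr hlkIn rfl rfl, core_ie σ τ (nbr G v) hτ]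
    refine Finset.sum_congr rfl fun η hη => ?_
    congr 1
    have hρσ : τ ∪ η ⊆ σ :=
      Finset.union_subset hτ ((Finset.mem_powerset.mp hη).trans Finset.sdiff_subset)
    have hcl : G.IsClique ((τ ∪ η : Finset V) : Set V) :=
      hσ.subset (Finset.coe_subset.mpr hρσ)
    have hvm : v ∉ τ ∪ η := fun h => hvσ (hρσ h)
    refine if_congr ?_ rfl rfl
    rw [Finset.mem_sdiff, mem_lk_iff hcl hvm]
    exact (and_iff_left hvσ).symm

lemma exists_good_map [DecidableEq V] (N : V → ℕ) :
    ∀ A B : Finset V, NM N A = NM N B →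
      ∃ g : V → V, Set.InjOn g ↑A ∧ A.image g = B ∧ ∀ x ∈ A, N (g x) = N x := by
  intro A
  induction A using Finset.induction_on with
  | empty =>
    intro B h
    have hB : B = ∅ := by
      rw [← Finset.val_eq_zero, ← Multiset.map_eq_zero (f := N)]
      exact (h.symm : NM N B = NM N ∅)
    exact ⟨id, by simp, by simp [hB], by simp⟩
  | @insert a A₀ ha IH =>
    intro B h
    have hNa : N a ∈ NM N B := by
      rw [← h, NM]
      exact Multiset.mem_map_of_mem N (Finset.mem_def.mp (Finset.mem_insert_self a A₀))
    obtain ⟨b, hb, hba⟩ := Multiset.mem_map.mp hNa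
    have hbB : b ∈ B := hb
    have h0 : NM N A₀ = NM N (B.erase b) := by
      have e1 : NM N (insert a A₀) = N a ::ₘ NM N A₀ := by
        rw [NM, Finset.insert_val_of_notMem ha, Multiset.map_cons]
        rfl
      have e2 : NM N B = N b ::ₘ NM N (B.erase b) := by
        rw [NM, NM, Finset.erase_val, ← Multiset.map_cons, Multiset.cons_erase hb]
      rw [e1, e2, hba] at h
      exact (Multiset.cons_inj_right _).mp h
    obtain ⟨g₀, hgi, hgim, hgN⟩ := IH (B.erase b) h0
    have hupd : ∀ x ∈ A₀, Function.update g₀ a b x = g₀ x := fun x hx =>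
      Function.update_of_ne (fun he => ha (by rw [← he]; exact hx)) _ _
    refine ⟨Function.update g₀ a b, ?_, ?_, ?_⟩
    · intro x hx y hy hxy
      simp only [Finset.coe_insert, Set.mem_insert_iff, Finset.mem_coe] at hx hy
      rcases hx with rfl | hx <;> rcases hy with rfl | hy
      · rfl
      · exfalso
        rw [Function.update_self, hupd y hy] at hxy
        have hm : g₀ y ∈ B.erase b := by
          rw [← hgim]; exact Finset.mem_image_of_mem _ hy
        rw [← hxy] at hm
        exact (Finset.mem_erase.mp hm).1 rfl
      · exfalso
        rw [Function.update_self, hupd x hx] at hxy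
        have hm : g₀ x ∈ B.erase b := by
          rw [← hgim]; exact Finset.mem_image_of_mem _ hx
        rw [hxy] at hm
        exact (Finset.mem_erase.mp hm).1 rfl
      · rw [hupd x hx, hupd y hy] at hxy
        exact hgi (Finset.mem_coe.mpr hx) (Finset.mem_coe.mpr hy) hxy
    · rw [Finset.image_insert, Function.update_self,
        Finset.image_congr (fun x hx => hupd x hx), hgim, Finset.insert_erase hbB]
    · intro x hx
      rcases Finset.mem_insert.mp hx with rfl | hx
      · rw [Function.update_self, hba]
      · rw [hupd x hx]
        exact hgN x hx

theorem stmt4 [Fintype V] (G : SimpleGraph V) (N : V → ℕ) (hN : ∀ v, 2 ≤ N v)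
    (hLR : LinkRegular G N) (σ σ' τ τ' : Finset V)
    (hσ : G.IsClique (σ : Set V)) (hσ' : G.IsClique (σ' : Set V))
    (hNσ : NM N σ = NM N σ')
    (hτ : τ ⊆ σ) (hτ' : τ' ⊆ σ') (hNτ : NM N τ = NM N τ') :
    NM N (lkIn G σ τ) = NM N (lkIn G σ' τ') := by
  classical
  have hAB : NM N (σ \ τ) = NM N (σ' \ τ') := by
    have h1 := NM_sdiff_add (N := N) hτ
    have h2 := NM_sdiff_add (N := N) hτ'
    have h3 : NM N τ + NM N (σ \ τ) = NM N τ + NM N (σ' \ τ') := by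
      rw [← h1, hNσ, h2, hNτ]
    exact add_left_cancel h3
  obtain ⟨g, hgi, hgim, hgN⟩ := exists_good_map N (σ \ τ) (σ' \ τ') hAB
  refine Multiset.ext.mpr fun n => ?_
  rw [NM_count, NM_count]
  have key : Fn N n (lkIn G σ τ) = Fn N n (lkIn G σ' τ') := by
    rw [stepA N n hσ hτ, stepA N n hσ' hτ']
    refine Finset.sum_nbij' (fun η => η.image g)
      (fun η' => (σ \ τ).filter fun x => g x ∈ η') ?_ ?_ ?_ ?_ ?_
    · intro η hη
      rw [Finset.mem_powerset] at hη ⊢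
      rw [← hgim]
      exact Finset.image_subset_image hη
    · intro η' _
      rw [Finset.mem_powerset]
      exact Finset.filter_subset _ _
    · intro η hη
      rw [Finset.mem_powerset] at hη
      ext x
      simp only [Finset.mem_filter, Finset.mem_image]
      constructor
      · rintro ⟨hxσ, y, hyη, hgy⟩
        rwa [← hgi (Finset.mem_coe.mpr (hη hyη)) (Finset.mem_coe.mpr hxσ) hgy]
      · intro hx
        exact ⟨hη hx, x, hx, rfl⟩
    · intro η' hη'
      rw [Finset.mem_powerset] at hη'
      ext y
      simp only [Finset.mem_image, Finset.mem_filter]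
      constructor
      · rintro ⟨x, ⟨-, hgx⟩, rfl⟩
        exact hgx
      · intro hy
        have : y ∈ (σ \ τ).image g := by rw [hgim]; exact hη' hy
        obtain ⟨x, hx, rfl⟩ := Finset.mem_image.mp this
        exact ⟨x, ⟨hx, hy⟩, rfl⟩
    · intro η hη
      rw [Finset.mem_powerset] at hη
      have hηi : Set.InjOn g ↑η := hgi.mono (Finset.coe_subset.mpr hη)
      have hcard : (η.image g).card = η.card := Finset.card_image_of_injOn hηi
      have hNMη : NM N (η.image g) = NM N η := NM_image hηi (fun x hx => hgN x (hη hx))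
      have hsub : τ ∪ η ⊆ σ := Finset.union_subset hτ (hη.trans Finset.sdiff_subset)
      have hη' : η.image g ⊆ σ' \ τ' := by
        rw [← hgim]; exact Finset.image_subset_image hη
      have hsub' : τ' ∪ η.image g ⊆ σ' :=
        Finset.union_subset hτ' (hη'.trans Finset.sdiff_subset)
      have hdisj : Disjoint τ η := Finset.disjoint_sdiff.mono_right hη
      have hdisj' : Disjoint τ' (η.image g) := Finset.disjoint_sdiff.mono_right hη'
      have hNMU : NM N (τ ∪ η) = NM N (τ' ∪ η.image g) := by
        rw [NM_union hdisj, NM_union hdisj', hNτ, hNMη]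
      have hlk := hLR (τ ∪ η) (τ' ∪ η.image g)
        (hσ.subset (Finset.coe_subset.mpr hsub))
        (hσ'.subset (Finset.coe_subset.mpr hsub')) hNMU
      rw [stepB N n hσ hsub, stepB N n hσ' hsub', hcard,
        Fn_congr hlk, Fn_congr (n := n) hNσ, Fn_congr hNMU]
  unfold Fn at key
  exact_mod_cast key
end

section
/- Let (Γ, N) and (Γ', N') be equivalent link-regular numbered graphs, with geodesic automata 𝒟 (transition δ) and 𝒟' (transition δ'), and let Σ and Σ' be powered cliques of (Γ, N) and (Γ', N') respectively with P(Σ) = P(Σ'). Then there exists a bijection Φ : VΓ → VΓ' such that N'(Φ(v)) = N(v) for all v ∈ VΓ, and for every v ∈ VΓ and each sign ε ∈ {+1, −1}: δ(Σ, v^ε) is the reject state of 𝒟 if and only if δ'(Σ', Φ(v)^ε) is the reject state of 𝒟', and when both are powered cliques, P(δ(Σ, v^ε)) = P(δ'(Σ', Φ(v)^ε)). -/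
variable {V V' : Type*}

/-- Equivalence of link-regular numbered graphs. -/
def EquivLinkRegular [Fintype V] [Fintype V'] (G : SimpleGraph V) (N : V → ℕ)
    (G' : SimpleGraph V') (N' : V' → ℕ) : Prop :=
  NM N Finset.univ = NM N' Finset.univ ∧
  ∀ (σ : Finset V) (σ' : Finset V'), G.IsClique (σ : Set V) → G'.IsClique (σ' : Set V') →
    NM N σ = NM N' σ' → NM N (lk G σ) = NM N' (lk G' σ')

/-- The power profile of a powered clique. -/
noncomputable def profile [Fintype V] (N : V → ℕ) (f : V → ℤ) : Multiset (ℤ × ℕ) :=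
  (Set.Finite.toFinset (Set.toFinite {v : V | f v ≠ 0})).val.map fun v => (f v, N v)

/-!
Let `σ`, `σ'` be the supports of `Σ`, `Σ'`. Equal power profiles give a bijection `e : σ ≃ σ'`
preserving values and numbers. For `τ ⊆ σ` the link of `τ` is `σ \ τ` together with the vertices
outside `σ` adjacent to all of `τ`, so equivalence of the numbered graphs says that the numbers of
the vertices outside `σ` adjacent to all of `τ`, and outside `σ'` adjacent to all of `e τ`, agree.
Möbius inversion over the subsets of `σ` gives the same for the vertices whose neighbours in `σ`
are exactly `τ`, resp. `e τ`. Hence `e` extends to a number-preserving bijection `Φ` with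
`u ~ v ↔ Φ u ~ Φ v` for all `u ∈ σ`; such a `Φ` carries `Σ` to `Σ'` and every transition of the
first automaton to the corresponding transition of the second.
-/

open Finset

theorem exists_subtype_equiv_of_card_filter_eq {α β γ : Type*} [Fintype α] [Fintype β]
    [DecidableEq γ] {p : α → Prop} {q : β → Prop} [DecidablePred p] [DecidablePred q]
    (T : α → γ) (T' : β → γ) (h : ∀ c, #{a | p a ∧ T a = c} = #{b | q b ∧ T' b = c}) :
    ∃ e : {a // p a} ≃ {b // q b}, ∀ a, T' (e a) = T a := by
  have hfib : ∀ c, Fintype.card {a : {a // p a} // T a = c} =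
      Fintype.card {b : {b // q b} // T' b = c} := fun c => by
    rw [Fintype.card_congr (Equiv.subtypeSubtypeEquivSubtypeInter p (T · = c)),
      Fintype.card_congr (Equiv.subtypeSubtypeEquivSubtypeInter q (T' · = c)),
      Fintype.card_subtype, Fintype.card_subtype, h]
  exact ⟨_, Equiv.ofFiberEquiv_map fun c => Fintype.equivOfCardEq (hfib c)⟩

theorem eq_of_forall_sum_Ici_eq {α M : Type*} [Fintype α] [DecidableEq α]
    [AddCancelCommMonoid M] {F₁ F₂ : Finset α → M}
    (h : ∀ τ, ∑ ρ ∈ Ici τ, F₁ ρ = ∑ ρ ∈ Ici τ, F₂ ρ) : F₁ = F₂ := by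
  funext τ
  induction τ using WellFoundedGT.induction with
  | _ τ ih =>
    have hIoi : ∑ ρ ∈ Ioi τ, F₁ ρ = ∑ ρ ∈ Ioi τ, F₂ ρ :=
      sum_congr rfl fun ρ hρ => ih ρ (mem_Ioi.1 hρ)
    have := h τ
    rw [← sum_Ioi_add_eq_sum_Ici, ← sum_Ioi_add_eq_sum_Ici, hIoi] at this
    exact add_left_cancel this

theorem Finset.count_map_val {α γ : Type*} [DecidableEq γ] (s : Finset α) (T : α → γ) (c : γ) :
    (s.val.map T).count c = #{a ∈ s | T a = c} := by
  simp [Multiset.count_map, eq_comm, Finset.card, Finset.filter_val]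

section Numbers

variable (N : V → ℕ)

theorem NM_eq_sum (s : Finset V) : NM N s = ∑ v ∈ s, {N v} := by
  conv_lhs => rw [← Multiset.sum_map_singleton (NM N s)]
  rw [NM, Multiset.map_map]
  rfl

theorem NM_union_of_disjoint [DecidableEq V] {s t : Finset V} (h : Disjoint s t) :
    NM N (s ∪ t) = NM N s + NM N t := by
  rw [NM, ← disjUnion_eq_union _ _ h, disjUnion_val, Multiset.map_add]
  rfl

theorem NM_sdiff [DecidableEq V] {σ τ : Finset V} (h : τ ⊆ σ) :
    NM N (σ \ τ) = NM N σ - NM N τ := by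
  apply eq_tsub_of_add_eq
  rw [← NM_union_of_disjoint N sdiff_disjoint, sdiff_union_of_subset h]

theorem NM_map_subtype_map_equiv {N' : V' → ℕ} {σ : Finset V} {σ' : Finset V'} (e : σ ≃ σ')
    (he : ∀ x, N' (e x) = N x) (τ : Finset σ) :
    NM N' ((τ.map e.toEmbedding).map (.subtype _)) = NM N (τ.map (.subtype _)) := by
  simp [NM, Multiset.map_map, he]

theorem NM_eq_of_equiv {N' : V' → ℕ} {σ : Finset V} {σ' : Finset V'} (e : σ ≃ σ')
    (he : ∀ x, N' (e x) = N x) : NM N' σ' = NM N σ := by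
  have := NM_map_subtype_map_equiv N e he univ
  rwa [map_univ_equiv, univ_eq_attach, univ_eq_attach, attach_map_val, attach_map_val] at this

end Numbers

section Trace

variable (G : SimpleGraph V) [DecidableRel G.Adj]

def adjTrace (σ : Finset V) (v : V) : Finset σ := {x | G.Adj v x}

@[simp]
theorem mem_adjTrace {σ : Finset V} {v : V} {x : σ} : x ∈ adjTrace G σ v ↔ G.Adj v x := by
  simp [adjTrace]

end Trace

section Link

variable [Fintype V] [DecidableEq V] (G : SimpleGraph V) [DecidableRel G.Adj] (N : V → ℕ)

theorem lk_eq_sdiff_union {σ τ : Finset V} (hσ : G.IsClique (σ : Set V)) (hτ : τ ⊆ σ) :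
    lk G τ = σ \ τ ∪ ({v | v ∉ σ ∧ ∀ u ∈ τ, G.Adj v u} : Finset V) := by
  ext v
  simp only [lk, Set.Finite.mem_toFinset, Set.mem_ofPred_eq, mem_union, mem_sdiff, mem_filter,
    mem_univ, true_and]
  constructor
  · rintro ⟨hvτ, hcl⟩
    by_cases hvσ : v ∈ σ
    · exact Or.inl ⟨hvσ, hvτ⟩
    · exact Or.inr ⟨hvσ, fun u hu =>
        (SimpleGraph.isClique_insert.1 hcl).2 u hu fun h => hvσ (h ▸ hτ hu)⟩
  · rintro (⟨hvσ, hvτ⟩ | ⟨hvσ, hadj⟩)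
    · exact ⟨hvτ, hσ.subset (Set.insert_subset hvσ (coe_subset.2 hτ))⟩
    · exact ⟨fun h => hvσ (hτ h), SimpleGraph.isClique_insert.2
        ⟨hσ.subset (coe_subset.2 hτ), fun u hu _ => hadj u hu⟩⟩

theorem NM_lk {σ τ : Finset V} (hσ : G.IsClique (σ : Set V)) (hτ : τ ⊆ σ) :
    NM N (lk G τ) = NM N (σ \ τ) + NM N {v | v ∉ σ ∧ ∀ u ∈ τ, G.Adj v u} := by
  rw [lk_eq_sdiff_union G hσ hτ, NM_union_of_disjoint]
  simp +contextual [disjoint_left]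

theorem NM_outside_eq_of_equivLinkRegular [Fintype V'] [DecidableEq V'] {G' : SimpleGraph V'}
    [DecidableRel G'.Adj] {N' : V' → ℕ} (hEq : EquivLinkRegular G N G' N')
    {σ τ : Finset V} {σ' τ' : Finset V'} (hσ : G.IsClique (σ : Set V))
    (hσ' : G'.IsClique (σ' : Set V')) (hτ : τ ⊆ σ) (hτ' : τ' ⊆ σ')
    (hNσ : NM N σ = NM N' σ') (hNτ : NM N τ = NM N' τ') :
    NM N {v | v ∉ σ ∧ ∀ u ∈ τ, G.Adj v u} = NM N' {v | v ∉ σ' ∧ ∀ u ∈ τ', G'.Adj v u} := by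
  have hlk := hEq.2 τ τ' (hσ.subset (coe_subset.2 hτ)) (hσ'.subset (coe_subset.2 hτ')) hNτ
  rw [NM_lk G N hσ hτ, NM_lk G' N' hσ' hτ', NM_sdiff N hτ, NM_sdiff N' hτ', hNσ, hNτ] at hlk
  exact add_left_cancel hlk

def outerNumbers (σ : Finset V) (ρ : Finset σ) : Multiset ℕ :=
  NM N {v | v ∉ σ ∧ adjTrace G σ v = ρ}

theorem sum_Ici_outerNumbers (σ : Finset V) (τ : Finset σ) :
    ∑ ρ ∈ Ici τ, outerNumbers G N σ ρ =
      NM N {v | v ∉ σ ∧ ∀ u ∈ τ.map (.subtype _), G.Adj v u} := by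
  rw [NM_eq_sum, ← sum_fiberwise_of_maps_to (g := adjTrace G σ) (t := Ici τ)]
  · refine sum_congr rfl fun ρ hρ => ?_
    rw [outerNumbers, NM_eq_sum, filter_filter]
    congr 1
    ext v
    have hτρ : τ ⊆ ρ := mem_Ici.1 hρ
    simp only [mem_filter, mem_univ, true_and, forall_mem_map, Function.Embedding.subtype_apply]
    constructor
    · rintro ⟨hv, rfl⟩
      exact ⟨⟨hv, fun x hx => (mem_adjTrace G).1 (hτρ hx)⟩, rfl⟩
    · exact fun ⟨⟨hv, _⟩, hρ⟩ => ⟨hv, hρ⟩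
  · intro v hv
    rw [mem_Ici]
    intro x hx
    simp only [mem_filter, mem_univ, true_and, forall_mem_map] at hv
    exact (mem_adjTrace G).2 (hv.2 x hx)

theorem outerNumbers_map_equiv [Fintype V'] [DecidableEq V'] {G' : SimpleGraph V'}
    [DecidableRel G'.Adj] {N' : V' → ℕ} (hEq : EquivLinkRegular G N G' N')
    {σ : Finset V} {σ' : Finset V'} (hσ : G.IsClique (σ : Set V))
    (hσ' : G'.IsClique (σ' : Set V')) (e : σ ≃ σ') (he : ∀ x, N' (e x) = N x) (ρ : Finset σ) :
    outerNumbers G' N' σ' (ρ.map e.toEmbedding) = outerNumbers G N σ ρ := by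
  refine congrFun (eq_of_forall_sum_Ici_eq
    (F₁ := fun ρ => outerNumbers G' N' σ' (ρ.map e.toEmbedding)) fun τ => ?_) ρ
  calc ∑ ρ ∈ Ici τ, outerNumbers G' N' σ' (ρ.map e.toEmbedding)
      = ∑ ρ' ∈ Ici (τ.map e.toEmbedding), outerNumbers G' N' σ' ρ' :=
        sum_equiv e.finsetCongr (by simp) (by simp)
    _ = NM N' {v | v ∉ σ' ∧ ∀ u ∈ (τ.map e.toEmbedding).map (.subtype _), G'.Adj v u} :=
        sum_Ici_outerNumbers G' N' σ' _
    _ = NM N {v | v ∉ σ ∧ ∀ u ∈ τ.map (.subtype _), G.Adj v u} :=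
        (NM_outside_eq_of_equivLinkRegular G N hEq hσ hσ' (map_subtype_subset _)
          (map_subtype_subset _) (NM_eq_of_equiv N e he).symm
          (NM_map_subtype_map_equiv N e he τ).symm).symm
    _ = ∑ ρ ∈ Ici τ, outerNumbers G N σ ρ := (sum_Ici_outerNumbers G N σ τ).symm

theorem card_filter_adjTrace_eq [Fintype V'] [DecidableEq V'] {G' : SimpleGraph V'}
    [DecidableRel G'.Adj] {N' : V' → ℕ} (hEq : EquivLinkRegular G N G' N')
    {σ : Finset V} {σ' : Finset V'} (hσ : G.IsClique (σ : Set V))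
    (hσ' : G'.IsClique (σ' : Set V')) (e : σ ≃ σ') (he : ∀ x, N' (e x) = N x) (n : ℕ)
    (ρ : Finset σ) :
    #{v | v ∉ σ ∧ (N v, adjTrace G σ v) = (n, ρ)} =
      #{v | v ∉ σ' ∧ (N' v, (adjTrace G' σ' v).map e.symm.toEmbedding) = (n, ρ)} := by
  have := congrArg (Multiset.count n) (outerNumbers_map_equiv G N hEq hσ hσ' e he ρ)
  simp only [outerNumbers, NM, count_map_val, filter_filter] at this
  have hsymm : ∀ s, s.map e.symm.toEmbedding = ρ ↔ s = ρ.map e.toEmbedding := fun s => by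
    rw [← Equiv.finsetCongr_apply, ← Equiv.finsetCongr_apply, ← Equiv.finsetCongr_symm,
      Equiv.symm_apply_eq]
  convert this.symm using 2 <;> ext v <;>
    simp only [mem_filter, mem_univ, true_and, Prod.mk.injEq, hsymm] <;> tauto

end Link

theorem SimpleGraph.IsClique.adj_iff_ne {W : Type*} {H : SimpleGraph W} {s : Set W}
    (hs : H.IsClique s) {a b : W} (ha : a ∈ s) (hb : b ∈ s) : H.Adj a b ↔ a ≠ b :=
  ⟨H.ne_of_adj, hs ha hb⟩

theorem exists_equiv_extend_of_isClique [Fintype V] [DecidableEq V] [Fintype V'] [DecidableEq V']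
    {G : SimpleGraph V} {G' : SimpleGraph V'} [DecidableRel G.Adj] [DecidableRel G'.Adj]
    {N : V → ℕ} {N' : V' → ℕ} (hEq : EquivLinkRegular G N G' N')
    {σ : Finset V} {σ' : Finset V'} (hσ : G.IsClique (σ : Set V))
    (hσ' : G'.IsClique (σ' : Set V')) (e : σ ≃ σ') (he : ∀ x, N' (e x) = N x) :
    ∃ Φ : V ≃ V', (∀ v, N' (Φ v) = N v) ∧ (∀ x : σ, Φ x = e x) ∧ (∀ v ∉ σ, Φ v ∉ σ') ∧
      ∀ v, ∀ u ∈ σ, (G.Adj v u ↔ G'.Adj (Φ v) (Φ u)) := by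
  obtain ⟨Ψ, hΨ⟩ := exists_subtype_equiv_of_card_filter_eq (p := (· ∉ σ)) (q := (· ∉ σ'))
    (fun v => (N v, adjTrace G σ v)) (fun v => (N' v, (adjTrace G' σ' v).map e.symm.toEmbedding))
    fun ⟨n, ρ⟩ => card_filter_adjTrace_eq G N hEq hσ hσ' e he n ρ
  have hΨN : ∀ w, N' (Ψ w) = N w := fun w => congrArg Prod.fst (hΨ w)
  have hΨadj : ∀ w x, G'.Adj (Ψ w) (e x) ↔ G.Adj w x := fun w x => by
    have h := congrArg Prod.snd (hΨ w)
    dsimp only at h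
    rw [← mem_adjTrace, ← mem_adjTrace, ← h, mem_map_equiv, Equiv.symm_symm]
  let Φ := (Equiv.sumCompl (· ∈ σ)).symm.trans ((e.sumCongr Ψ).trans (Equiv.sumCompl (· ∈ σ')))
  have hin : ∀ x : σ, Φ x = e x := fun x => by simp [Φ]
  have hout : ∀ v (hv : v ∉ σ), Φ v = Ψ ⟨v, hv⟩ := fun v hv => by
    simp [Φ, Equiv.sumCompl_symm_apply_of_neg hv]
  refine ⟨Φ, fun v => ?_, hin, fun v hv => hout v hv ▸ (Ψ _).2, fun v u hu => ?_⟩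
  · by_cases hv : v ∈ σ
    · exact (hin ⟨v, hv⟩).symm ▸ he _
    · exact (hout v hv).symm ▸ hΨN _
  · rw [show Φ u = e ⟨u, hu⟩ from hin ⟨u, hu⟩]
    by_cases hv : v ∈ σ
    · rw [show Φ v = e ⟨v, hv⟩ from hin ⟨v, hv⟩, hσ.adj_iff_ne hv hu,
        hσ'.adj_iff_ne (e _).2 (e _).2, Ne, Ne, Subtype.coe_inj,
        e.injective.eq_iff, Subtype.mk.injEq]
    · rw [hout v hv, hΨadj]

section Automaton

variable [Fintype V] [Fintype V']

noncomputable def supportFinset (f : V → ℤ) : Finset V :=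
  Set.Finite.toFinset (Set.toFinite {v | f v ≠ 0})

@[simp]
theorem mem_supportFinset {f : V → ℤ} {v : V} : v ∈ supportFinset f ↔ f v ≠ 0 :=
  Set.Finite.mem_toFinset _

theorem profile_eq (N : V → ℕ) (f : V → ℤ) :
    profile N f = (supportFinset f).val.map fun v => (f v, N v) := rfl

theorem IsPoweredClique.isClique_supportFinset {G : SimpleGraph V} {N : V → ℕ} {f : V → ℤ}
    (hf : IsPoweredClique G N f) : G.IsClique (supportFinset f : Set V) := by
  simpa [supportFinset] using hf.1

theorem exists_equiv_supportFinset_of_profile_eq {N : V → ℕ} {N' : V' → ℕ} {f : V → ℤ}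
    {f' : V' → ℤ} (hP : profile N f = profile N' f') :
    ∃ e : supportFinset f ≃ supportFinset f', ∀ x, (f' (e x), N' (e x)) = (f x, N x) := by
  classical
  refine exists_subtype_equiv_of_card_filter_eq (p := (· ∈ supportFinset f))
    (q := (· ∈ supportFinset f')) (fun v => (f v, N v)) (fun v => (f' v, N' v)) fun c => ?_
  have := congrArg (Multiset.count c) hP
  rw [profile_eq, profile_eq, count_map_val, count_map_val] at this
  convert this using 2 <;> ext <;> simp

theorem profile_eq_of_equiv {N : V → ℕ} {N' : V' → ℕ} {g : V → ℤ} {g' : V' → ℤ} (Φ : V ≃ V')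
    (hN : ∀ v, N' (Φ v) = N v) (hg : ∀ v, g' (Φ v) = g v) : profile N g = profile N' g' := by
  have hsupp : supportFinset g' = (supportFinset g).map Φ.toEmbedding := by
    ext w
    rw [mem_map_equiv, mem_supportFinset, mem_supportFinset, ← hg, Φ.apply_symm_apply]
  simp [profile_eq, hsupp, Multiset.map_map, hN, hg]

end Automaton

theorem step_map_equiv [DecidableEq V] [DecidableEq V'] {G : SimpleGraph V} {G' : SimpleGraph V'}
    [DecidableRel G.Adj] [DecidableRel G'.Adj] {N : V → ℕ} {N' : V' → ℕ} {f : V → ℤ}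
    {f' : V' → ℤ} (Φ : V ≃ V') (hN : ∀ v, N' (Φ v) = N v) (hf : ∀ v, f' (Φ v) = f v)
    (hadj : ∀ v u, f u ≠ 0 → (G.Adj v u ↔ G'.Adj (Φ v) (Φ u))) (v : V) (b : Bool) :
    step G' N' f' (Φ v, b) = (step G N f (v, b)).map (· ∘ Φ.symm) := by
  have hupd : ∀ c : ℤ, (fun u' => if u' = Φ v then c else if G'.Adj (Φ v) u' then f' u' else 0) =
      (fun u => if u = v then c else if G.Adj v u then f u else 0) ∘ Φ.symm := fun c => by
    funext u'
    obtain ⟨u, rfl⟩ := Φ.surjective u'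
    simp only [Function.comp_apply, Φ.symm_apply_apply, Φ.injective.eq_iff, hf]
    by_cases hu : f u = 0
    · simp [hu]
    · simp only [hadj v u hu]
  cases b <;> simp only [step, hN, hf, hupd] <;> split_ifs <;> rfl

theorem stmt6_general [Fintype V] [Fintype V'] [DecidableEq V] [DecidableEq V']
    (G : SimpleGraph V) (G' : SimpleGraph V')
    [DecidableRel G.Adj] [DecidableRel G'.Adj]
    (N : V → ℕ) (N' : V' → ℕ)
    (hEq : EquivLinkRegular G N G' N')
    (f : V → ℤ) (f' : V' → ℤ)
    (hf : IsPoweredClique G N f) (hf' : IsPoweredClique G' N' f')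
    (hP : profile N f = profile N' f') :
    ∃ Φ : V ≃ V', (∀ v, N' (Φ v) = N v) ∧
      ∀ (v : V) (b : Bool),
        (step G N f (v, b) = none ↔ step G' N' f' (Φ v, b) = none) ∧
        ∀ g g', step G N f (v, b) = some g → step G' N' f' (Φ v, b) = some g' →
          profile N g = profile N' g' := by
  obtain ⟨e, he⟩ := exists_equiv_supportFinset_of_profile_eq hP
  obtain ⟨Φ, hNΦ, hΦe, hΦout, hΦadj⟩ := exists_equiv_extend_of_isClique hEq
    hf.isClique_supportFinset hf'.isClique_supportFinset e fun x => congrArg Prod.snd (he x)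
  have hfΦ : ∀ v, f' (Φ v) = f v := fun v => by
    by_cases hv : f v = 0
    · simpa [hv] using hΦout v (by simpa using hv)
    · simpa [hΦe ⟨v, mem_supportFinset.2 hv⟩] using congrArg Prod.fst (he ⟨v, _⟩)
  have hstep := step_map_equiv Φ hNΦ hfΦ fun v u hu => hΦadj v u (mem_supportFinset.2 hu)
  refine ⟨Φ, hNΦ, fun v b => ⟨?_, fun g g' hg hg' => ?_⟩⟩
  · rw [hstep, Option.map_eq_none_iff]
  · rw [hstep, hg, Option.map_some, Option.some_inj] at hg'
    exact profile_eq_of_equiv Φ hNΦ fun u => by simp [← hg']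

theorem stmt6 [Fintype V] [Fintype V'] [DecidableEq V] [DecidableEq V']
    (G : SimpleGraph V) (G' : SimpleGraph V')
    [DecidableRel G.Adj] [DecidableRel G'.Adj]
    (N : V → ℕ) (N' : V' → ℕ) (hN : ∀ v, 2 ≤ N v) (hN' : ∀ v, 2 ≤ N' v)
    (hLR : LinkRegular G N) (hLR' : LinkRegular G' N')
    (hEq : EquivLinkRegular G N G' N')
    (f : V → ℤ) (f' : V' → ℤ)
    (hf : IsPoweredClique G N f) (hf' : IsPoweredClique G' N' f')
    (hP : profile N f = profile N' f') :
    ∃ Φ : V ≃ V', (∀ v, N' (Φ v) = N v) ∧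
      ∀ (v : V) (b : Bool),
        (step G N f (v, b) = none ↔ step G' N' f' (Φ v, b) = none) ∧
        ∀ g g', step G N f (v, b) = some g → step G' N' f' (Φ v, b) = some g' →
          profile N g = profile N' g' :=
  stmt6_general G G' N N' hEq f f' hf hf' hP
end

section
/- Let Γ be a finite link-regular simple graph with maximal clique size d. Fix integers 1 ≤ m ≤ d and 0 ≤ k ≤ m, and fix an ordered (k+1)-clique (v₁, …, v_k, u) of Γ. Then the number of tuples (v_{k+1}, …, v_m) of distinct vertices, all distinct from v₁, …, v_k and from u, such that (v₁, …, v_m) is an ordered m-clique and none of v_{k+1}, …, v_m is adjacent to u, equals N_{m,k}; in particular this count is independent of the choice of the ordered (k+1)-clique (v₁, …, v_k, u). -/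
/-! Peeling off one vertex at a time, a clique `σ` of `Γ` has `∏_{j<r} ℓ_{|σ|+j}` ordered
extensions by `r` vertices. If `σ ∪ {u}` is a clique, the extensions whose entries at `a`
prescribed positions are adjacent to `u` are counted the same way once those positions are
moved to the front: the first `a` entries extend `σ ∪ {u}`, the remaining `r - a` extend `σ`
together with those `a` entries. Inclusion–exclusion over the positions adjacent to `u` yields
`N_{m,k}`. For `r ≥ 2` no entry can equal `u` (it would be adjacent to another entry), while for
`r = 1` the tuple `(u)` has to be discarded, which is the `-1` in `N_{k+1,k}`. -/

variable {V : Type*}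

/-- Link-regularity of a simple graph: cliques of the same size have links of the same size. -/
def LinkRegularS [Fintype V] (G : SimpleGraph V) : Prop :=
  ∀ σ₁ σ₂ : Finset V, G.IsClique (σ₁ : Set V) → G.IsClique (σ₂ : Set V) →
    σ₁.card = σ₂.card → (lk G σ₁).card = (lk G σ₂).card

/-- The numbers `N_{m,k}` of the paper, in terms of the link sizes `ℓ`. -/
def Nmk (ℓ : ℕ → ℤ) (m k : ℕ) : ℤ :=
  if k = m then 1
  else if k + 1 = m then ℓ (m - 1) - ℓ m - 1
  else (∏ j ∈ Finset.Ioo k m, ℓ j) *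
    ∑ j ∈ Finset.Icc k m, ((m - k).choose (j - k) : ℤ) * (-1) ^ (j - k) * ℓ j


open Finset
open scoped Classical

theorem card_filter_forall_not_eq_sum_powerset {α ι : Type*} [Fintype α] [Fintype ι]
    (E : Finset α) (p : ι → α → Prop) [∀ i, DecidablePred (p i)] :
    (#{x ∈ E | ∀ i, ¬ p i x} : ℤ) =
      ∑ S ∈ (univ : Finset ι).powerset, (-1 : ℤ) ^ #S * #{x ∈ E | ∀ i ∈ S, p i x} := by
  have key := inclusion_exclusion_sum_inf_compl (G := ℤ) univ (fun i => {x | p i x})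
    (fun x => if x ∈ E then 1 else 0)
  simp only [sum_boole, smul_eq_mul, filter_mem_eq_inter] at key
  convert key using 5 <;> first | rfl | (ext; simp [mem_inf, and_comm])

theorem prod_range_mul_prod_range_sub {M : Type*} [CommMonoid M] (f : ℕ → M) (n : ℕ)
    {a r : ℕ} (ha : a ≤ r + 1) :
    (∏ i ∈ range a, f (n + 1 + i)) * ∏ i ∈ range (r + 1 - a), f (n + a + i) =
      f (n + a) * ∏ i ∈ range r, f (n + 1 + i) := by
  rcases Nat.lt_or_ge r a with h | h
  · obtain rfl : a = r + 1 := by omega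
    rw [Nat.sub_self, range_zero, prod_empty, mul_one, prod_range_succ, mul_comm,
      add_comm r 1, add_assoc]
  · obtain ⟨b, rfl⟩ := Nat.exists_eq_add_of_le h
    rw [show a + b + 1 - a = b + 1 by omega, prod_range_succ', prod_range_add, add_zero]
    simp only [add_assoc, add_comm 1]
    ac_rfl

namespace SimpleGraph

section Link
variable [Fintype V] {G : SimpleGraph V} {σ : Finset V} {u v : V}

theorem mem_lk : v ∈ lk G σ ↔ v ∉ σ ∧ G.IsClique (insert v (σ : Set V)) := by
  simp [lk]

theorem lk_empty : lk G ∅ = univ := by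
  ext
  simp [mem_lk]

theorem isClique_insert_of_mem_lk (hv : v ∈ lk G σ) :
    G.IsClique ((insert v σ : Finset V) : Set V) := by
  simpa using (mem_lk.1 hv).2

theorem card_insert_of_mem_lk (hv : v ∈ lk G σ) : #(insert v σ) = #σ + 1 :=
  card_insert_of_notMem (mem_lk.1 hv).1

theorem lk_insert (hσu : G.IsClique ((insert u σ : Finset V) : Set V)) :
    lk G (insert u σ) = {v ∈ lk G σ | G.Adj u v} := by
  ext v
  simp only [mem_filter, mem_lk, coe_insert, mem_insert, not_or, Set.insert_comm v u]
  constructor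
  · rintro ⟨⟨hvu, hvσ⟩, hcl⟩
    exact ⟨⟨hvσ, hcl.subset (Set.subset_insert _ _)⟩,
      hcl (Set.mem_insert _ _) (Set.mem_insert_of_mem _ (Set.mem_insert _ _)) (Ne.symm hvu)⟩
  · rintro ⟨⟨hvσ, hcl⟩, hadj⟩
    refine ⟨⟨hadj.ne', hvσ⟩, hcl.insert ?_⟩
    rintro b (rfl | hb) hub
    · exact hadj
    · exact hσu (mem_insert_self u σ) (mem_insert_of_mem hb) hub

end Link

noncomputable def cliqueExtensions [Fintype V] (G : SimpleGraph V) (σ : Finset V) {r : ℕ}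
    (P : Fin r → V → Prop) : Finset (Fin r → V) :=
  {s | Function.Injective s ∧ (∀ i, s i ∉ σ) ∧ G.IsClique ((σ : Set V) ∪ Set.range s) ∧
    ∀ i, P i (s i)}

section Extensions
variable [Fintype V] {G : SimpleGraph V} {σ : Finset V} {r : ℕ}

theorem mem_cliqueExtensions {P : Fin r → V → Prop} {s : Fin r → V} :
    s ∈ G.cliqueExtensions σ P ↔ Function.Injective s ∧ (∀ i, s i ∉ σ) ∧
      G.IsClique ((σ : Set V) ∪ Set.range s) ∧ ∀ i, P i (s i) := by
  simp [cliqueExtensions]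

theorem card_cliqueExtensions_zero (hσ : G.IsClique (σ : Set V)) (P : Fin 0 → V → Prop) :
    #(G.cliqueExtensions σ P) = 1 := by
  rw [card_eq_one]
  refine ⟨Fin.elim0, eq_singleton_iff_unique_mem.2 ⟨?_, fun s _ => funext fun i => i.elim0⟩⟩
  simpa [mem_cliqueExtensions, Function.injective_of_subsingleton] using hσ

theorem cons_mem_cliqueExtensions {P : Fin (r + 1) → V → Prop} {v : V} {s : Fin r → V} :
    Fin.cons v s ∈ G.cliqueExtensions σ P ↔
      (v ∈ lk G σ ∧ P 0 v) ∧ s ∈ G.cliqueExtensions (insert v σ) fun i => P i.succ := by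
  simp only [mem_cliqueExtensions, mem_lk, Fin.cons_injective_iff, Fin.forall_fin_succ,
    Fin.cons_zero, Fin.cons_succ, Fin.range_cons, coe_insert, mem_insert, not_or, Set.mem_range,
    not_exists, Set.union_insert, Set.insert_union, forall_and]
  have hsub : G.IsClique (insert v ((σ : Set V) ∪ Set.range s)) →
      G.IsClique (insert v (σ : Set V)) :=
    fun h => h.subset (Set.insert_subset_insert Set.subset_union_left)
  tauto

theorem card_cliqueExtensions_succ (P : Fin (r + 1) → V → Prop) [∀ i, DecidablePred (P i)] :
    #(G.cliqueExtensions σ P) =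
      ∑ v ∈ lk G σ with P 0 v, #(G.cliqueExtensions (insert v σ) fun i => P i.succ) := by
  rw [← card_sigma]
  refine card_nbij' (fun s => ⟨s 0, Fin.tail s⟩) (fun p => Fin.cons p.1 p.2) ?_ ?_ ?_ ?_
  · intro s hs
    rw [mem_coe, ← Fin.cons_self_tail s, cons_mem_cliqueExtensions] at hs
    simpa using hs
  · rintro ⟨v, s⟩ h
    simpa [cons_mem_cliqueExtensions] using h
  · intro s _
    simp
  · rintro ⟨v, s⟩ _
    simp

theorem card_cliqueExtensions_one (P : Fin 1 → V → Prop) [∀ i, DecidablePred (P i)] :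
    #(G.cliqueExtensions σ P) = #{v ∈ lk G σ | P 0 v} := by
  rw [card_cliqueExtensions_succ, card_eq_sum_ones]
  exact sum_congr rfl fun v hv =>
    card_cliqueExtensions_zero (isClique_insert_of_mem_lk (mem_filter.1 hv).1) _

theorem comp_mem_cliqueExtensions {P : Fin r → V → Prop} {s : Fin r → V}
    (π : Equiv.Perm (Fin r)) :
    s ∘ π ∈ G.cliqueExtensions σ (fun i => P (π i)) ↔ s ∈ G.cliqueExtensions σ P := by
  simp only [mem_cliqueExtensions, π.injective_comp, Function.comp_apply,
    π.surjective.range_comp, π.forall_congr_right (q := fun i => s i ∉ σ),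
    π.forall_congr_right (q := fun i => P i (s i))]

theorem card_cliqueExtensions_comp_perm (P : Fin r → V → Prop) (π : Equiv.Perm (Fin r)) :
    #(G.cliqueExtensions σ fun i => P (π i)) = #(G.cliqueExtensions σ P) := by
  refine card_nbij' (· ∘ π.symm) (· ∘ π) (fun s hs => ?_)
    (fun s hs => (comp_mem_cliqueExtensions π).2 hs)
    (fun s _ => by simp [Function.comp_def]) (fun s _ => by simp [Function.comp_def])
  rw [mem_coe, ← comp_mem_cliqueExtensions π]
  simpa [Function.comp_def] using hs

theorem card_cliqueExtensions_not_eq_sum_powerset (Q : Fin r → V → Prop) :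
    (#(G.cliqueExtensions σ fun i v => ¬ Q i v) : ℤ) =
      ∑ S ∈ (univ : Finset (Fin r)).powerset,
        (-1 : ℤ) ^ #S * #(G.cliqueExtensions σ fun i v => i ∈ S → Q i v) := by
  convert card_filter_forall_not_eq_sum_powerset (G.cliqueExtensions σ fun _ _ => True)
    (fun i s => Q i (s i)) using 5 <;> ext <;> simp [mem_cliqueExtensions, and_assoc]

theorem cliqueExtensions_ne_and_not_adj {u : V} (hr : 2 ≤ r) :
    G.cliqueExtensions σ (fun (_ : Fin r) v => v ≠ u ∧ ¬ G.Adj u v) =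
      G.cliqueExtensions σ fun _ v => ¬ G.Adj u v := by
  have : Nontrivial (Fin r) := Fin.nontrivial_iff_two_le.2 hr
  ext s
  simp only [mem_cliqueExtensions, forall_and]
  refine ⟨fun ⟨hinj, hσ, hcl, _, hna⟩ => ⟨hinj, hσ, hcl, hna⟩,
    fun ⟨hinj, hσ, hcl, hna⟩ => ⟨hinj, hσ, hcl, fun i hi => ?_, hna⟩⟩
  obtain ⟨j, hj⟩ := exists_ne i
  exact hna j (hi ▸ hcl (Or.inr ⟨i, rfl⟩) (Or.inr ⟨j, rfl⟩) (hinj.ne hj.symm))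

theorem card_cliqueExtensions_one_ne_and_not_adj {u : V} (hu : u ∉ σ)
    (hσu : G.IsClique ((insert u σ : Finset V) : Set V)) :
    #(G.cliqueExtensions σ fun (_ : Fin 1) v => v ≠ u ∧ ¬ G.Adj u v) + 1 =
      #(G.cliqueExtensions σ fun (_ : Fin 1) v => ¬ G.Adj u v) := by
  have herase :
      {v ∈ lk G σ | v ≠ u ∧ ¬ G.Adj u v} = {v ∈ lk G σ | ¬ G.Adj u v}.erase u := by
    ext v
    simp only [mem_filter, mem_erase]
    tauto
  rw [card_cliqueExtensions_one, card_cliqueExtensions_one, herase, card_erase_add_one]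
  exact mem_filter.2 ⟨mem_lk.2 ⟨hu, by simpa using hσu⟩, G.irrefl⟩

theorem coe_cliqueExtensions_image {k : ℕ} (t : Fin k → V) (u : V) :
    ((G.cliqueExtensions (univ.image t) fun (_ : Fin r) v => v ≠ u ∧ ¬ G.Adj u v :
        Finset (Fin r → V)) : Set (Fin r → V)) =
      {s | Function.Injective s ∧ (∀ i j, s i ≠ t j) ∧ (∀ i, s i ≠ u) ∧
        G.IsClique (Set.range t ∪ Set.range s) ∧ ∀ i, ¬ G.Adj u (s i)} := by
  ext s
  simp only [Set.mem_ofPred_eq, mem_coe, mem_cliqueExtensions, coe_image, coe_univ,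
    Set.image_univ, mem_image, mem_univ, true_and, not_exists, forall_and, ne_eq, eq_comm]
  tauto

end Extensions

def HasLinkSizes [Fintype V] (G : SimpleGraph V) (ℓ : ℕ → ℤ) : Prop :=
  ∀ σ : Finset V, G.IsClique (σ : Set V) → (#(lk G σ) : ℤ) = ℓ #σ

theorem hasLinkSizes_of_card_le [Fintype V] {G : SimpleGraph V} {d : ℕ} {ℓ : ℕ → ℤ}
    (hmax : ∀ σ : Finset V, G.IsClique (σ : Set V) → #σ ≤ d) (hℓ0 : ℓ 0 = Fintype.card V)
    (hℓ : ∀ k, 1 ≤ k → k ≤ d → ∀ σ : Finset V, G.IsClique (σ : Set V) → #σ = k →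
      ℓ k = (#(lk G σ) : ℤ)) :
    G.HasLinkSizes ℓ := fun σ hσ => by
  rcases Nat.eq_zero_or_pos #σ with h0 | hpos
  · rw [card_eq_zero.1 h0, lk_empty, card_univ, card_empty, hℓ0]
  · exact (hℓ _ hpos (hmax σ hσ) σ hσ rfl).symm

section Counting
variable [Fintype V] {G : SimpleGraph V} {ℓ : ℕ → ℤ} {σ : Finset V} {u : V}

theorem card_cliqueExtensions_true (hℓ : G.HasLinkSizes ℓ) (r : ℕ)
    (hσ : G.IsClique (σ : Set V)) :
    (#(G.cliqueExtensions σ fun (_ : Fin r) _ => True) : ℤ) = ∏ i ∈ range r, ℓ (#σ + i) := by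
  induction r generalizing σ with
  | zero => simp [card_cliqueExtensions_zero hσ]
  | succ r ih =>
    have hstep : ∀ v ∈ lk G σ,
        (#(G.cliqueExtensions (insert v σ) fun (_ : Fin r) _ => True) : ℤ) =
          ∏ i ∈ range r, ℓ (#σ + (i + 1)) := fun v hv => by
      rw [ih (isClique_insert_of_mem_lk hv), card_insert_of_mem_lk hv]
      simp only [add_assoc, add_comm 1]
    rw [card_cliqueExtensions_succ, filter_true, Nat.cast_sum, sum_congr rfl hstep, sum_const,
      nsmul_eq_mul, hℓ σ hσ, prod_range_succ', mul_comm, add_zero]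

theorem card_cliqueExtensions_adj_lt (hℓ : G.HasLinkSizes ℓ) {a r : ℕ} (har : a ≤ r)
    (hu : u ∉ σ) (hσu : G.IsClique ((insert u σ : Finset V) : Set V)) :
    (#(G.cliqueExtensions σ fun (i : Fin r) v => (i : ℕ) < a → G.Adj u v) : ℤ) =
      (∏ i ∈ range a, ℓ (#σ + 1 + i)) * ∏ i ∈ range (r - a), ℓ (#σ + a + i) := by
  induction a generalizing r σ with
  | zero =>
    simp only [not_lt_zero, false_implies]
    rw [card_cliqueExtensions_true hℓ r (hσu.subset (by simp))]
    simp
  | succ a ih =>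
    obtain ⟨r, rfl⟩ : ∃ r', r = r' + 1 := Nat.exists_eq_add_one.2 (by omega)
    have hstep : ∀ v ∈ lk G (insert u σ),
        (#(G.cliqueExtensions (insert v σ)
            fun (i : Fin r) w => (i.succ : ℕ) < a + 1 → G.Adj u w) : ℤ) =
          (∏ i ∈ range a, ℓ (#σ + 1 + (i + 1))) * ∏ i ∈ range (r - a), ℓ (#σ + (a + 1) + i) :=
        fun v hv => by
      have hvσ : v ∉ σ ∧ v ≠ u := by simpa [mem_lk, and_comm] using (mem_lk.1 hv).1
      simp only [Fin.val_succ, Nat.add_lt_add_iff_right]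
      rw [ih (by omega) (by simp [hu, Ne.symm hvσ.2])
        (by rw [Finset.insert_comm]; exact isClique_insert_of_mem_lk hv),
        card_insert_of_notMem hvσ.1]
      ring_nf
    simp only [card_cliqueExtensions_succ, Fin.val_zero, Nat.zero_lt_succ, true_implies,
      ← lk_insert hσu]
    rw [Nat.cast_sum, sum_congr rfl hstep, sum_const, nsmul_eq_mul, hℓ _ hσu,
      card_insert_of_notMem hu, prod_range_succ', Nat.add_sub_add_right]
    ring

theorem card_cliqueExtensions_adj_mem (hℓ : G.HasLinkSizes ℓ) {r : ℕ} (S : Finset (Fin r))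
    (hu : u ∉ σ) (hσu : G.IsClique ((insert u σ : Finset V) : Set V)) :
    (#(G.cliqueExtensions σ fun i v => i ∈ S → G.Adj u v) : ℤ) =
      (∏ i ∈ range #S, ℓ (#σ + 1 + i)) * ∏ i ∈ range (r - #S), ℓ (#σ + #S + i) := by
  have hS : #S ≤ r := by simpa using card_le_univ S
  obtain ⟨π, hπ⟩ := Equiv.Perm.exists_map_finset_eq {i : Fin r | (i : ℕ) < #S} S
    (by simpa [Fin.card_filter_val_lt] using hS)
  rw [← card_cliqueExtensions_adj_lt hℓ hS hu hσu,
    ← card_cliqueExtensions_comp_perm (fun i v => (i : ℕ) < #S → G.Adj u v) π.symm]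
  have hmem (i : Fin r) : i ∈ S ↔ ((π.symm i : Fin r) : ℕ) < #S := by
    conv_lhs => rw [← hπ]
    simp [mem_map_equiv]
  simp only [hmem]

theorem card_cliqueExtensions_not_adj (hℓ : G.HasLinkSizes ℓ) (r : ℕ)
    (hu : u ∉ σ) (hσu : G.IsClique ((insert u σ : Finset V) : Set V)) :
    (#(G.cliqueExtensions σ fun (_ : Fin (r + 1)) v => ¬ G.Adj u v) : ℤ) =
      (∏ i ∈ range r, ℓ (#σ + 1 + i)) *
        ∑ a ∈ range (r + 2), ((r + 1).choose a : ℤ) * (-1) ^ a * ℓ (#σ + a) := by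
  have hterm (S : Finset (Fin (r + 1))) :
      (#(G.cliqueExtensions σ fun i v => i ∈ S → G.Adj u v) : ℤ) =
        ℓ (#σ + #S) * ∏ i ∈ range r, ℓ (#σ + 1 + i) := by
    rw [card_cliqueExtensions_adj_mem hℓ S hu hσu,
      prod_range_mul_prod_range_sub ℓ _ (by simpa using card_le_univ S)]
  simp only [card_cliqueExtensions_not_eq_sum_powerset, hterm]
  rw [sum_powerset_apply_card
      (fun a => (-1 : ℤ) ^ a * (ℓ (#σ + a) * ∏ i ∈ range r, ℓ (#σ + 1 + i))),
    card_univ, Fintype.card_fin, mul_sum]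
  refine sum_congr rfl fun a _ => ?_
  rw [nsmul_eq_mul]
  ring

end Counting

end SimpleGraph

theorem Nmk_add_two (ℓ : ℕ → ℤ) (k r : ℕ) :
    Nmk ℓ (k + (r + 2)) k = (∏ i ∈ range (r + 1), ℓ (k + 1 + i)) *
      ∑ a ∈ range (r + 3), ((r + 2).choose a : ℤ) * (-1) ^ a * ℓ (k + a) := by
  rw [Nmk, if_neg (by omega), if_neg (by omega), ← Ico_add_one_right_eq_Icc,
    ← Ico_add_one_left_eq_Ioo, prod_Ico_eq_prod_range, sum_Ico_eq_sum_range]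
  simp only [show k + (r + 2) - (k + 1) = r + 1 by omega,
    show k + (r + 2) + 1 - k = r + 3 by omega, Nat.add_sub_cancel_left]

theorem stmt12_general [Fintype V] (G : SimpleGraph V) (d : ℕ)
    (hmax : ∀ σ : Finset V, G.IsClique (σ : Set V) → σ.card ≤ d)
    (ℓ : ℕ → ℤ) (hℓ0 : ℓ 0 = Fintype.card V)
    (hℓ : ∀ k, 1 ≤ k → k ≤ d → ∀ σ : Finset V, G.IsClique (σ : Set V) → σ.card = k →
      ℓ k = ((lk G σ).card : ℤ))
    (m k : ℕ) (hk : k ≤ m)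
    (t : Fin k → V) (u : V) (ht : Function.Injective t)
    (hu : u ∉ Set.range t) (hclique : G.IsClique (insert u (Set.range t))) :
    (Set.ncard {s : Fin (m - k) → V |
        Function.Injective s ∧ (∀ i j, s i ≠ t j) ∧ (∀ i, s i ≠ u) ∧
        G.IsClique (Set.range t ∪ Set.range s) ∧ ∀ i, ¬ G.Adj u (s i)} : ℤ) =
      Nmk ℓ m k := by
  have hG := SimpleGraph.hasLinkSizes_of_card_le hmax hℓ0 hℓ
  obtain ⟨r, rfl⟩ := Nat.exists_eq_add_of_le hk
  set σ : Finset V := univ.image t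
  have hσu : G.IsClique ((insert u σ : Finset V) : Set V) := by simpa [σ] using hclique
  have huσ : u ∉ σ := by simpa [σ] using hu
  have hσk : #σ = k := by simpa [σ] using card_image_of_injective univ ht
  rw [Nat.add_sub_cancel_left, ← SimpleGraph.coe_cliqueExtensions_image, Set.ncard_coe_finset]
  rcases r with _ | _ | r
  · rw [SimpleGraph.card_cliqueExtensions_zero (hσu.subset (coe_subset.2 (subset_insert u σ)))]
    simp [Nmk]
  · have h := SimpleGraph.card_cliqueExtensions_not_adj hG 0 huσ hσu
    rw [← SimpleGraph.card_cliqueExtensions_one_ne_and_not_adj huσ hσu, hσk] at h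
    norm_num [sum_range_succ] at h
    rw [Nmk, if_neg (by omega), if_pos rfl, add_tsub_cancel_right]
    linarith
  · rw [SimpleGraph.cliqueExtensions_ne_and_not_adj (by omega),
      SimpleGraph.card_cliqueExtensions_not_adj hG _ huσ hσu, Nmk_add_two, hσk]

theorem stmt12 [Fintype V] (G : SimpleGraph V) (d : ℕ)
    (hLR : LinkRegularS G)
    (hmax : ∀ σ : Finset V, G.IsClique (σ : Set V) → σ.card ≤ d)
    (hmax' : ∃ σ : Finset V, G.IsClique (σ : Set V) ∧ σ.card = d)
    (ℓ : ℕ → ℤ) (hℓ0 : ℓ 0 = Fintype.card V)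
    (hℓ : ∀ k, 1 ≤ k → k ≤ d → ∀ σ : Finset V, G.IsClique (σ : Set V) → σ.card = k →
      ℓ k = ((lk G σ).card : ℤ))
    (m k : ℕ) (hm1 : 1 ≤ m) (hmd : m ≤ d) (hk : k ≤ m)
    (t : Fin k → V) (u : V) (ht : Function.Injective t)
    (hu : u ∉ Set.range t) (hclique : G.IsClique (insert u (Set.range t))) :
    (Set.ncard {s : Fin (m - k) → V |
        Function.Injective s ∧ (∀ i j, s i ≠ t j) ∧ (∀ i, s i ≠ u) ∧
        G.IsClique (Set.range t ∪ Set.range s) ∧ ∀ i, ¬ G.Adj u (s i)} : ℤ) =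
      Nmk ℓ m k :=
  stmt12_general G d hmax ℓ hℓ0 hℓ m k hk t u ht hu hclique
end

section
/- Let d ≥ 1 and let ℓ₀, …, ℓ_d be integers. Define integers A_{m,k} for 1 ≤ m ≤ d and 0 ≤ k ≤ m by: A_{m,m} = 1, A_{m,m−1} = ℓ_{m−1} − ℓ_m − 1, and A_{m,k} = ℓ_{m−1} A_{m−1,k} − ℓ_{k+1} A_{m,k+1} for k < m − 1. Then for all 1 ≤ m ≤ d and 0 ≤ k < m − 1, A_{m,k} = (∏_{k<j<m} ℓ_j) · Σ_{j=k}^{m} binom(m−k, j−k)(−1)^{j−k} ℓ_j. -/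
/-!
The alternating binomial sum is `(-1)^(m-k) Δ^(m-k) ℓ (k)` for the forward difference `Δ`, so
Pascal's rule for it is just `Δ^(n+1) ℓ (k) = Δ^n ℓ (k+1) - Δ^n ℓ (k)`. Together with
`ℓ_{m-1} ∏_{k<j<m-1} ℓ_j = ∏_{k<j<m} ℓ_j = ℓ_{k+1} ∏_{k+1<j<m} ℓ_j` this shows that the closed form
satisfies the recurrence, and induction on `m - k ≥ 2` does the rest. The closed form is off by `-1`
on the subdiagonal `m - k = 1`, but when `m = k + 2` both subdiagonal entries in the recurrence carry
the same weight `ℓ_{k+1}`, so the two defects cancel.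
-/

open Finset fwdDiff

section Intervals

variable {M : Type*} [CommMonoid M]

theorem Finset.prod_Ioo_succ_top {a b : ℕ} (hab : a < b) (f : ℕ → M) :
    ∏ j ∈ Ioo a (b + 1), f j = (∏ j ∈ Ioo a b, f j) * f b := by
  rw [Ioo_add_one_right_eq_Ioc, ← Ioo_insert_right hab, prod_insert right_notMem_Ioo, mul_comm]

theorem Finset.prod_eq_prod_Ioo_succ_bot {a b : ℕ} (hab : a + 1 < b) (f : ℕ → M) :
    ∏ j ∈ Ioo a b, f j = f (a + 1) * ∏ j ∈ Ioo (a + 1) b, f j := by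
  rw [← Ico_add_one_left_eq_Ioo, ← Ioo_insert_left hab, prod_insert left_notMem_Ioo]

end Intervals

section ForwardDifference

variable {R : Type*} [CommRing R]

theorem fwdDiff_iter_succ_apply (f : ℕ → R) (n k : ℕ) :
    (Δ_[1])^[n + 1] f k = (Δ_[1])^[n] f (k + 1) - (Δ_[1])^[n] f k := by
  rw [Function.iterate_succ_apply']
  rfl

theorem sum_Icc_choose_mul_neg_one_pow_mul_eq_fwdDiff_iter {k m : ℕ} (hkm : k ≤ m) (f : ℕ → R) :
    ∑ j ∈ Icc k m, ((m - k).choose (j - k) : R) * (-1) ^ (j - k) * f j =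
      (-1) ^ (m - k) * (Δ_[1])^[m - k] f k := by
  obtain ⟨n, rfl⟩ := Nat.exists_eq_add_of_le hkm
  rw [fwdDiff_iter_eq_sum_shift, ← Ico_add_one_right_eq_Icc, sum_Ico_eq_sum_range, mul_sum]
  simp only [Nat.add_sub_cancel_left]
  refine sum_congr (by congr 1; omega) fun i hi => ?_
  obtain ⟨j, rfl⟩ := Nat.exists_eq_add_of_le (Nat.lt_succ_iff.mp (mem_range.mp hi))
  have hsq : ((-1 : R) ^ j) * (-1) ^ j = 1 := by rw [← mul_pow]; simp
  rw [Nat.add_sub_cancel_left, smul_eq_mul, mul_one, zsmul_eq_mul]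
  push_cast
  linear_combination (-(-1 : R) ^ i * ((i + j).choose i : R) * f (k + i)) * hsq

end ForwardDifference

section Recurrence

variable {R : Type*} [CommRing R] {d : ℕ} {ℓ : ℕ → R} {A : ℕ → ℕ → R}

theorem eq_prod_Ioo_mul_fwdDiff_iter_of_rec
    (hsub : ∀ m, 1 ≤ m → m ≤ d → A m (m - 1) = ℓ (m - 1) - ℓ m - 1)
    (hrec : ∀ m k, 1 ≤ m → m ≤ d → k + 1 < m →
      A m k = ℓ (m - 1) * A (m - 1) k - ℓ (k + 1) * A m (k + 1))
    (n k : ℕ) (hd : k + n + 2 ≤ d) :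
    A (k + n + 2) k =
      (∏ j ∈ Ioo k (k + n + 2), ℓ j) * ((-1) ^ (n + 2) * (Δ_[1])^[n + 2] ℓ k) := by
  induction n generalizing k with
  | zero =>
    have h := hrec (k + 2) k (by omega) hd (by omega)
    have h₁ := hsub (k + 1) (by omega) (by omega)
    have h₂ := hsub (k + 2) (by omega) (by omega)
    rw [show k + 2 - 1 = k + 1 by omega] at h h₂
    rw [Nat.add_sub_cancel] at h₁
    rw [add_zero, h, h₁, h₂, prod_Ioo_succ_top k.lt_add_one,
      Ioo_add_one_right_eq_Ioc, Ioc_self, prod_empty]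
    simp only [fwdDiff_iter_succ_apply, Function.iterate_zero_apply]
    ring
  | succ n ih =>
    have h := hrec (k + (n + 1) + 2) k (by omega) hd (by omega)
    rw [show k + (n + 1) + 2 - 1 = k + n + 2 by omega] at h
    have h₁ := ih k (by omega)
    have h₂ : A (k + (n + 1) + 2) (k + 1) = (∏ j ∈ Ioo (k + 1) (k + (n + 1) + 2), ℓ j) *
        ((-1) ^ (n + 2) * (Δ_[1])^[n + 2] ℓ (k + 1)) := by
      rw [show k + (n + 1) + 2 = k + 1 + n + 2 by omega]
      exact ih (k + 1) (by omega)
    have hP₁ : ∏ j ∈ Ioo k (k + (n + 1) + 2), ℓ j =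
        (∏ j ∈ Ioo k (k + n + 2), ℓ j) * ℓ (k + n + 2) :=
      prod_Ioo_succ_top (by omega) ℓ
    have hP₂ : ∏ j ∈ Ioo k (k + (n + 1) + 2), ℓ j =
        ℓ (k + 1) * ∏ j ∈ Ioo (k + 1) (k + (n + 1) + 2), ℓ j :=
      prod_eq_prod_Ioo_succ_bot (by omega) ℓ
    rw [h, h₁, h₂, show n + 1 + 2 = n + 2 + 1 from rfl, fwdDiff_iter_succ_apply ℓ (n + 2) k]
    linear_combination
      (-1) ^ (n + 2) * ((Δ_[1])^[n + 2] ℓ (k + 1) * hP₂ - (Δ_[1])^[n + 2] ℓ k * hP₁)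

end Recurrence

theorem stmt13_general (d : ℕ) (ℓ : ℕ → ℤ) (A : ℕ → ℕ → ℤ)
    (hAmm1 : ∀ m, 1 ≤ m → m ≤ d → A m (m - 1) = ℓ (m - 1) - ℓ m - 1)
    (hArec : ∀ m k, 1 ≤ m → m ≤ d → k + 1 < m →
      A m k = ℓ (m - 1) * A (m - 1) k - ℓ (k + 1) * A m (k + 1)) :
    ∀ m k, 1 ≤ m → m ≤ d → k + 1 < m →
      A m k = (∏ j ∈ Finset.Ioo k m, ℓ j) *
        ∑ j ∈ Finset.Icc k m, ((m - k).choose (j - k) : ℤ) * (-1) ^ (j - k) * ℓ j := by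
  intro m k _ hmd hkm
  obtain ⟨n, rfl⟩ : ∃ n, m = k + n + 2 := ⟨m - k - 2, by omega⟩
  rw [sum_Icc_choose_mul_neg_one_pow_mul_eq_fwdDiff_iter (by omega),
    show k + n + 2 - k = n + 2 by omega]
  exact eq_prod_Ioo_mul_fwdDiff_iter_of_rec hAmm1 hArec n k hmd

theorem stmt13 (d : ℕ) (hd : 1 ≤ d) (ℓ : ℕ → ℤ) (A : ℕ → ℕ → ℤ)
    (hAmm : ∀ m, 1 ≤ m → m ≤ d → A m m = 1)
    (hAmm1 : ∀ m, 1 ≤ m → m ≤ d → A m (m - 1) = ℓ (m - 1) - ℓ m - 1)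
    (hArec : ∀ m k, 1 ≤ m → m ≤ d → k + 1 < m →
      A m k = ℓ (m - 1) * A (m - 1) k - ℓ (k + 1) * A m (k + 1)) :
    ∀ m k, 1 ≤ m → m ≤ d → k + 1 < m →
      A m k = (∏ j ∈ Finset.Ioo k m, ℓ j) *
        ∑ j ∈ Finset.Icc k m, ((m - k).choose (j - k) : ℤ) * (-1) ^ (j - k) * ℓ j :=
  stmt13_general d ℓ A hAmm1 hArec
end
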